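/- arXiv:1611.09150 — 5 statements merged into one kernel-verified Lean document; each statement's English description precedes it below -/
import Mathlib

section
/- For any root basis (V, ⟨·,·⟩, Π) of a Coxeter graph Γ with Coxeter system (W,S), the map S → GL(V), s ↦ f_s (where f_s(x) = x − 2⟨x,ε_s⟩ε_s) extends to a group homomorphism f: W → GL(V), and this homomorphism is injective (i.e., the rooted representation is faithful). -/
noncomputable section

open Real

namespace CoxeterFixedPoints

/-- `(V, B, ε)` is a root basis of the Coxeter graph whose Coxeter matrix is `M`
(the entry `0` of a Coxeter matrix stands for `∞`). -/
def IsRootBasis {S V : Type*} [AddCommGroup V] [Module ℝ V]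
    (M : CoxeterMatrix S) (B : V →ₗ[ℝ] V →ₗ[ℝ] ℝ) (ε : S → V) : Prop :=
  (∀ x y : V, B x y = B y x) ∧
  (∀ s : S, B (ε s) (ε s) = 1) ∧
  (∀ s t : S, s ≠ t → M s t ≠ 0 →
    B (ε s) (ε t) = - Real.cos (Real.pi / (M s t : ℝ))) ∧
  (∀ s t : S, s ≠ t → M s t = 0 → B (ε s) (ε t) ≤ -1) ∧
  (∃ χ : V →ₗ[ℝ] ℝ, ∀ s : S, 0 < χ (ε s))

/-- The standard parabolic subgroup `W_X` of `W` generated by `X ⊆ S`. -/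
def parabolic {S W : Type*} [Group W] {M : CoxeterMatrix S} (cs : CoxeterSystem M W)
    (X : Set S) : Subgroup W :=
  Subgroup.closure (cs.simple '' X)

/-- `w` is the longest element of the standard parabolic subgroup `W_X`. -/
def IsLongestElement {S W : Type*} [Group W] {M : CoxeterMatrix S} (cs : CoxeterSystem M W)
    (X : Set S) (w : W) : Prop :=
  w ∈ parabolic cs X ∧ ∀ u ∈ parabolic cs X, cs.length u ≤ cs.length w

/-- `X ∈ 𝒮`, i.e. `X` is an orbit of `G` in `S` such that `W_X` is finite. -/
def IsFinOrbit {S W : Type*} [Group W] {M : CoxeterMatrix S} (cs : CoxeterSystem M W)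
    (G : Type*) [Group G] [MulAction G S] (X : Set S) : Prop :=
  (∃ s : S, X = MulAction.orbit G s) ∧ ((parabolic cs X : Set W)).Finite

/-- `a_X = Σ_{s ∈ X} ε_s`. -/
def aVec {S V : Type*} [AddCommGroup V] [Module ℝ V] (ε : S → V) (X : Set S) : V :=
  ∑ᶠ s ∈ X, ε s

/-- `ε̃_X = a_X / ⟨a_X, a_X⟩^{1/2}`. -/
def epsTilde {S V : Type*} [AddCommGroup V] [Module ℝ V]
    (B : V →ₗ[ℝ] V →ₗ[ℝ] ℝ) (ε : S → V) (X : Set S) : V :=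
  (Real.sqrt (B (aVec ε X) (aVec ε X)))⁻¹ • aVec ε X

/-- There is no edge of the Coxeter graph of `M` between a vertex of `X` and a
(distinct) vertex of `Y`. -/
def NoEdges {S : Type*} (M : CoxeterMatrix S) (X Y : Set S) : Prop :=
  ∀ s ∈ X, ∀ t ∈ Y, s ≠ t → M s t = 2

/-- `X` is of type I : `Γ_X` has no edge. -/
def TypeI {S : Type*} (M : CoxeterMatrix S) (X : Set S) : Prop :=
  ∀ s ∈ X, ∀ t ∈ X, s ≠ t → M s t = 2

/-- `X` is of type II_m : `X` is partitioned into pairs `{s, ι s}` with `m_{s, ι s} = m ≥ 3`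
(`m` finite), and `m_{s,t} = 2` for `s, t ∈ X` not belonging to a common pair. -/
def TypeII {S : Type*} (M : CoxeterMatrix S) (X : Set S) (m : ℕ) : Prop :=
  3 ≤ m ∧ ∃ ι : S → S,
    (∀ s ∈ X, ι s ∈ X ∧ ι s ≠ s ∧ ι (ι s) = s ∧ M s (ι s) = m) ∧
    (∀ s ∈ X, ∀ t ∈ X, t ≠ s → t ≠ ι s → M s t = 2)

/-- `Γ_{X ∪ Y}` is a disjoint union of single edges with label `m ≥ 3` (possibly `m = ∞`,
encoded by `0`), each edge joining a vertex of `X` to a vertex of `Y` :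
bi-orbit of type (1). -/
def BiOrbit1 {S : Type*} (M : CoxeterMatrix S) (X Y : Set S) (m : ℕ) : Prop :=
  (m = 0 ∨ 3 ≤ m) ∧
  ∃ σ : S → S, Set.BijOn σ X Y ∧
    (∀ x ∈ X, M x (σ x) = m) ∧
    (∀ x ∈ X, ∀ y ∈ Y, y ≠ σ x → M x y = 2) ∧
    NoEdges M X X ∧ NoEdges M Y Y

/-- `Γ_{E ∪ C}` is a disjoint union of paths `a − b − c` with both labels `3`, whose end
vertices lie in `E` and whose middle vertex lies in `C` : bi-orbit of type (2)
(in one of the two orientations). -/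
def BiOrbit2 {S : Type*} (M : CoxeterMatrix S) (E C : Set S) : Prop :=
  ∃ τ : S → S, Set.MapsTo τ E C ∧
    (∀ c ∈ C, {e | e ∈ E ∧ τ e = c}.ncard = 2) ∧
    (∀ e ∈ E, M e (τ e) = 3) ∧
    (∀ e ∈ E, ∀ c ∈ C, c ≠ τ e → M e c = 2) ∧
    NoEdges M E E ∧ NoEdges M C C

/-- `Γ_{D ∪ C}` is a disjoint union of paths `a − b − c − d` with `a, d ∈ D`, `b, c ∈ C`,
outer labels `3` and middle label `mid` : used for bi-orbits of types (3) and (4). -/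
def BiOrbitPath {S : Type*} (M : CoxeterMatrix S) (D C : Set S) (mid : ℕ) : Prop :=
  ∃ σ ι : S → S, Set.BijOn σ D C ∧
    (∀ c ∈ C, ι c ∈ C ∧ ι c ≠ c ∧ ι (ι c) = c ∧ M c (ι c) = mid) ∧
    (∀ d ∈ D, M d (σ d) = 3) ∧
    (∀ d ∈ D, ∀ c ∈ C, c ≠ σ d → M d c = 2) ∧
    (∀ c ∈ C, ∀ c' ∈ C, c' ≠ c → c' ≠ ι c → M c c' = 2) ∧
    NoEdges M D D

/-- Bi-orbit of type (3) : paths `a − b − c − d` with all labels `3`. -/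
def BiOrbit3 {S : Type*} (M : CoxeterMatrix S) (D C : Set S) : Prop :=
  BiOrbitPath M D C 3

/-- Bi-orbit of type (4) : paths `a − b − c − d` with labels `3, 4, 3`. -/
def BiOrbit4 {S : Type*} (M : CoxeterMatrix S) (D C : Set S) : Prop :=
  BiOrbitPath M D C 4

/-- `Γ_{L ∪ C}` is a disjoint union of stars with center in `C`, three leaves in `L`
and all labels `3` : bi-orbit of type (5) (in one of the two orientations). -/
def BiOrbit5 {S : Type*} (M : CoxeterMatrix S) (L C : Set S) : Prop :=
  ∃ τ : S → S, Set.MapsTo τ L C ∧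
    (∀ c ∈ C, {l | l ∈ L ∧ τ l = c}.ncard = 3) ∧
    (∀ l ∈ L, M l (τ l) = 3) ∧
    (∀ l ∈ L, ∀ c ∈ C, c ≠ τ l → M l c = 2) ∧
    NoEdges M L L ∧ NoEdges M C C

/-- `m` is the entry `m̃_{X,Y}` of the Coxeter matrix `M̃` of `Γ̃` (`0` stands for `∞`). -/
def TildeMIs {S : Type*} (M : CoxeterMatrix S) (X Y : Set S) (m : ℕ) : Prop :=
  (X = Y ∧ m = 1) ∨
  (X ≠ Y ∧
    ((NoEdges M X Y ∧ m = 2) ∨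
     (¬ NoEdges M X Y ∧
       ((BiOrbit1 M X Y m ∨ BiOrbit1 M Y X m) ∨
        ((BiOrbit2 M X Y ∨ BiOrbit2 M Y X) ∧ m = 4) ∨
        ((BiOrbit3 M X Y ∨ BiOrbit3 M Y X) ∧ m = 4) ∨
        ((BiOrbit4 M X Y ∨ BiOrbit4 M Y X) ∧ m = 8) ∨
        ((BiOrbit5 M X Y ∨ BiOrbit5 M Y X) ∧ m = 6) ∨
        ((∀ k : ℕ, ¬ BiOrbit1 M X Y k ∧ ¬ BiOrbit1 M Y X k) ∧
         (¬ BiOrbit2 M X Y ∧ ¬ BiOrbit2 M Y X) ∧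
         (¬ BiOrbit3 M X Y ∧ ¬ BiOrbit3 M Y X) ∧
         (¬ BiOrbit4 M X Y ∧ ¬ BiOrbit4 M Y X) ∧
         (¬ BiOrbit5 M X Y ∧ ¬ BiOrbit5 M Y X) ∧ m = 0)))))

/-- `v_X = |{t ∈ Y | m_{s,t} ≥ 3}|` (including `m_{s,t} = ∞`, encoded by `0`),
for a chosen `s` in the other orbit. -/
def vcount {S : Type*} (M : CoxeterMatrix S) (Y : Set S) (s : S) : ℕ :=
  {t | t ∈ Y ∧ (M s t = 0 ∨ 3 ≤ M s t)}.ncard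

/-- `p_X = Σ_{t ∈ Y} ⟨ε_s, ε_t⟩`, for a chosen `s` in the other orbit. -/
def psum {S V : Type*} [AddCommGroup V] [Module ℝ V]
    (B : V →ₗ[ℝ] V →ₗ[ℝ] ℝ) (ε : S → V) (Y : Set S) (s : S) : ℝ :=
  ∑ᶠ t ∈ Y, B (ε s) (ε t)

/-- The subgroup `W^G` of elements of `W` fixed by the action of `G` on `W`
given by `φ : G →* MulAut W`. -/
def fixedSubgroup {W G : Type*} [Group W] [Group G] (φ : G →* MulAut W) : Subgroup W where
  carrier := {w | ∀ g : G, φ g w = w}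
  one_mem' := fun g => map_one (φ g)
  mul_mem' := by
    intro a b ha hb g
    rw [map_mul, ha g, hb g]
  inv_mem' := by
    intro a ha g
    rw [map_inv, ha g]

/-- The subspace `V^G` of vectors of `V` fixed by the action of `G` on `V`
given by `ρ : G →* GL(V)`. -/
def fixedSubmodule {V G : Type*} [AddCommGroup V] [Module ℝ V] [Group G]
    (ρ : G →* (V ≃ₗ[ℝ] V)) : Submodule ℝ V where
  carrier := {x | ∀ g : G, ρ g x = x}
  zero_mem' := fun g => map_zero (ρ g)
  add_mem' := by
    intro a b ha hb g
    rw [map_add, ha g, hb g]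
  smul_mem' := by
    intro c x hx g
    rw [map_smul, hx g]

end CoxeterFixedPoints

/-!
Tits' argument. On the plane spanned by `ε s, ε t` the products of `f_s, f_t` along alternating
words act through the Chebyshev polynomials `S k` evaluated at `2 c`, where `⟨ε s, ε t⟩ = -c`;
for `c = cos (π / m)` these are `sin ((k + 1) π / m) / sin (π / m)`, which gives
`(f_s f_t) ^ m = 1` there, and `f_s, f_t` fix the orthogonal complement of that plane.

For faithfulness, let `C` be the cone spanned by the `ε s`. If `s` is not a right descent of `w`
then `f_w ε_s ∈ C`: for a descent `t` of `w`, write `w = v u` with `u` in the dihedral subgroup of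
`s, t` and `v` having neither `s` nor `t` as a descent. Then `u` is an alternating word of length
`< m_{s,t}`, so `f_u ε_s` is a nonnegative combination of `ε s, ε t`, and induction on the length
applies to `v`. If `f_w = 1` and `s` is a descent of `w ≠ 1`, then `f_{w s} ε_s = -ε_s ∈ C`,
contradicting `χ > 0` on the `ε s`.
-/

open Polynomial CoxeterSystem

section Reflection

variable {V : Type*} [AddCommGroup V] [Module ℝ V] (B : V →ₗ[ℝ] V →ₗ[ℝ] ℝ) {α : V}

def unitReflection (hα : B α α = 1) : V ≃ₗ[ℝ] V :=
  Module.reflection (f := (2 : ℝ) • B.flip α) (x := α) (by simp [hα])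

variable (hα : B α α = 1)

theorem unitReflection_apply (x : V) : unitReflection B hα x = x - (2 * B x α) • α := by
  simp [unitReflection, Module.reflection_apply]

theorem unitReflection_mul_self : unitReflection B hα * unitReflection B hα = 1 :=
  LinearEquiv.ext (Module.involutive_reflection _)

theorem unitReflection_inv : (unitReflection B hα)⁻¹ = unitReflection B hα :=
  Module.reflection_inv _

theorem unitReflection_apply_of_orthogonal {x : V} (hx : B x α = 0) :
    unitReflection B hα x = x := by
  simp [unitReflection_apply, hx]

end Reflection

theorem neg_notMem_hull_range {ι V : Type*} [AddCommGroup V] [Module ℝ V] {v : ι → V}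
    (χ : V →ₗ[ℝ] ℝ) (hχ : ∀ i, 0 < χ (v i)) (i : ι) :
    -v i ∉ PointedCone.hull ℝ (Set.range v) := by
  intro h
  have hle : PointedCone.hull ℝ (Set.range v) ≤ (PointedCone.positive ℝ ℝ).comap χ :=
    Submodule.span_le.mpr (by rintro _ ⟨j, rfl⟩; exact (hχ j).le)
  have := hle h
  simp only [PointedCone.mem_comap, PointedCone.mem_positive, map_neg, Left.nonneg_neg_iff] at this
  linarith [hχ i]

theorem Real.sin_pi_div_natCast_pos {m : ℕ} (hm : 2 ≤ m) : 0 < sin (π / m) :=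
  sin_pos_of_pos_of_lt_pi (div_pos pi_pos (by positivity))
    (div_lt_self pi_pos (by exact_mod_cast hm))

namespace Polynomial.Chebyshev

theorem S_eval_nonneg_of_two_le {x : ℝ} (hx : 2 ≤ x) {k : ℤ} (hk : -1 ≤ k) :
    0 ≤ (S ℝ k).eval x := by
  have key : ∀ n : ℕ, 0 ≤ (S ℝ (n - 1)).eval x ∧ (S ℝ (n - 1)).eval x ≤ (S ℝ n).eval x := by
    intro n
    induction n with
    | zero => simp
    | succ n ih =>
      have hS := congrArg (eval x) (S_add_one ℝ (n : ℤ))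
      simp only [eval_sub, eval_mul, eval_X] at hS
      push_cast
      rw [add_sub_cancel_right, hS]
      constructor <;> nlinarith
  obtain ⟨n, rfl⟩ : ∃ n : ℕ, k = n - 1 := ⟨(k + 1).toNat, by omega⟩
  exact (key n).1

theorem S_eval_two_mul_cos_pi_div_nonneg {m : ℕ} (hm : 2 ≤ m) {k : ℤ} (hk : -1 ≤ k)
    (hkm : k + 1 ≤ m) : 0 ≤ (S ℝ k).eval (2 * cos (π / m)) := by
  have hsin : 0 ≤ sin ((k + 1) * (π / m)) := by
    apply sin_nonneg_of_nonneg_of_le_pi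
    · have : (0 : ℝ) ≤ k + 1 := by exact_mod_cast (by omega : (0 : ℤ) ≤ k + 1)
      positivity
    · calc ((k : ℝ) + 1) * (π / m) ≤ m * (π / m) := by gcongr; exact_mod_cast hkm
        _ = π := mul_div_cancel₀ _ (by positivity)
  rw [← S_two_mul_real_cos] at hsin
  exact nonneg_of_mul_nonneg_left hsin (sin_pi_div_natCast_pos hm)

theorem S_eval_two_mul_cos_pi_div {m : ℕ} (hm : 2 ≤ m) :
    (S ℝ (2 * m)).eval (2 * cos (π / m)) = 1 ∧ (S ℝ (2 * m - 1)).eval (2 * cos (π / m)) = 0 := by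
  have hθ := (sin_pi_div_natCast_pos hm).ne'
  have hmθ : (m : ℝ) * (π / m) = π := mul_div_cancel₀ _ (by positivity)
  have h₁ := S_two_mul_real_cos (π / m) (2 * m)
  have h₀ := S_two_mul_real_cos (π / m) (2 * m - 1)
  push_cast at h₁ h₀
  rw [show (2 * m + 1 : ℝ) * (π / m) = π / m + 2 * π by linear_combination 2 * hmθ,
    sin_add_two_pi] at h₁
  rw [show (2 * m - 1 + 1 : ℝ) * (π / m) = (2 : ℕ) * π by push_cast; linear_combination 2 * hmθ,
    sin_nat_mul_pi] at h₀
  exact ⟨mul_right_cancel₀ hθ (h₁.trans (one_mul _).symm), (mul_eq_zero.mp h₀).resolve_right hθ⟩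

end Polynomial.Chebyshev

namespace CoxeterSystem

theorem prod_map_alternatingWord_two_mul {S G : Type*} [Monoid G] (r : S → G) (s t : S)
    (k : ℕ) : ((alternatingWord s t (2 * k)).map r).prod = (r s * r t) ^ k := by
  induction k with
  | zero => simp [alternatingWord]
  | succ k ih =>
    rw [mul_add_one, alternatingWord_succ', alternatingWord_succ', if_neg (by simp),
      if_pos (by simp), List.map_cons, List.map_cons, List.prod_cons, List.prod_cons, ih,
      pow_succ', mul_assoc]

variable {S W : Type*} [Group W] {M : CoxeterMatrix S} (cs : CoxeterSystem M W)

theorem not_isReduced_cons_cons (i : S) (ω : List S) : ¬ cs.IsReduced (i :: i :: ω) := by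
  intro h
  have := cs.length_wordProd_le ω
  rw [CoxeterSystem.IsReduced, wordProd_cons, wordProd_cons,
    cs.simple_mul_simple_cancel_left] at h
  simp only [List.length_cons] at h
  omega

theorem eq_alternatingWord_of_isReduced_append {s t : S} :
    ∀ ω : List S, (∀ i ∈ ω, i = s ∨ i = t) → cs.IsReduced (ω ++ [s]) →
      ω = alternatingWord s t ω.length
  | [], _, _ => rfl
  | u :: ω, hω, hred => by
    have ih := eq_alternatingWord_of_isReduced_append ω (fun i hi => hω i (.tail u hi))
      (by simpa using hred.drop 1)
    have hnext : ω ++ [s] = alternatingWord t s (ω.length + 1) := by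
      rw [alternatingWord_succ, ← ih, List.concat_eq_append]
    rw [List.cons_append, hnext, alternatingWord_succ'] at hred
    have hu : u ≠ if Even ω.length then s else t := by
      rintro rfl
      exact cs.not_isReduced_cons_cons _ _ hred
    rw [List.length_cons, alternatingWord_succ', ← ih]
    congr 1
    split_ifs at hu ⊢ <;> rcases hω u (.head ω) with h | h <;> first | exact h | exact absurd h hu

theorem exists_eq_mul_wordProd_pair_not_isRightDescent (w : W) (s t : S) :
    ∃ (v : W) (ω : List S), (∀ i ∈ ω, i = s ∨ i = t) ∧ w = v * cs.wordProd ω ∧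
      cs.length w = cs.length v + ω.length ∧
      ¬ cs.IsRightDescent v s ∧ ¬ cs.IsRightDescent v t := by
  induction hn : cs.length w using Nat.strong_induction_on generalizing w with
  | _ n ih =>
  by_cases h : ∃ i, (i = s ∨ i = t) ∧ cs.IsRightDescent w i
  · obtain ⟨i, hi, hdesc⟩ := h
    have hlen := cs.isRightDescent_iff.mp hdesc
    obtain ⟨v, ω, hω, hw, hl, hvs, hvt⟩ := ih _ (by omega) (w * cs.simple i) rfl
    refine ⟨v, ω ++ [i], ?_, ?_, ?_, hvs, hvt⟩
    · simpa [or_imp, forall_and] using ⟨hω, hi⟩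
    · rw [wordProd_append, wordProd_singleton, ← mul_assoc, ← hw,
        cs.simple_mul_simple_cancel_right]
    · simp only [List.length_append, List.length_singleton]
      omega
  · push Not at h
    exact ⟨w, [], by simp, by simp, by simp [hn], h s (.inl rfl), h t (.inr rfl)⟩

theorem isReduced_append_of_not_isRightDescent {w v : W} {ω : List S} {s : S}
    (hw : w = v * cs.wordProd ω) (hl : cs.length w = cs.length v + ω.length)
    (hs : ¬ cs.IsRightDescent w s) : cs.IsReduced (ω ++ [s]) := by
  have hws := cs.not_isRightDescent_iff.mp hs
  have hprod : cs.wordProd (ω ++ [s]) = v⁻¹ * (w * cs.simple s) := by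
    rw [wordProd_append, wordProd_singleton, hw]
    group
  have hge := cs.length_le_length_mul_add_left v⁻¹ (w * cs.simple s)
  have hle := cs.length_wordProd_le (ω ++ [s])
  rw [← hprod, cs.length_inv] at hge
  rw [CoxeterSystem.IsReduced]
  simp only [List.length_append, List.length_singleton] at hle ⊢
  omega

end CoxeterSystem

section Dihedral

variable {S V : Type*} [AddCommGroup V] [Module ℝ V] (B : V →ₗ[ℝ] V →ₗ[ℝ] ℝ)

theorem eq_one_of_fixes_of_orthogonal {α β : V} {c : ℝ} (hα : B α α = 1) (hβ : B β β = 1)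
    (hαβ : B α β = -c) (hβα : B β α = -c) (hc : c ^ 2 ≠ 1) (g : V ≃ₗ[ℝ] V)
    (hgα : g α = α) (hgβ : g β = β) (horth : ∀ x, B x α = 0 → B x β = 0 → g x = x) :
    g = 1 := by
  -- the Gram matrix of `α, β` is invertible, so `V = span {α, β} ⊕ {α, β}ᗮ`
  ext x
  have hc' : 1 - c ^ 2 ≠ 0 := sub_ne_zero.mpr (Ne.symm hc)
  set a := (B x α + c * B x β) / (1 - c ^ 2)
  set b := (B x β + c * B x α) / (1 - c ^ 2)
  set q := x - a • α - b • β
  have hqα : B q α = 0 := by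
    simp only [q, a, b, map_sub, map_smul, LinearMap.sub_apply, LinearMap.smul_apply,
      smul_eq_mul, hα, hβα]
    field_simp
    ring
  have hqβ : B q β = 0 := by
    simp only [q, a, b, map_sub, map_smul, LinearMap.sub_apply, LinearMap.smul_apply,
      smul_eq_mul, hβ, hαβ]
    field_simp
    ring
  have hx : x = a • α + b • β + q := by module
  change g x = x
  rw [hx, map_add, map_add, map_smul, map_smul, hgα, hgβ, horth q hqα hqβ]

variable {ε : S → V} (h1 : ∀ s, B (ε s) (ε s) = 1) {s t : S}

-- `alternatingWord s t n` ends in `t`, so `f_t` acts first.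
theorem prod_map_unitReflection_alternatingWord_apply {c : ℝ} (hst : B (ε s) (ε t) = -c)
    (hts : B (ε t) (ε s) = -c) (n : ℕ) :
    ((alternatingWord s t n).map fun i => unitReflection B (h1 i)).prod (ε s) =
      if Even n then
        (Chebyshev.S ℝ n).eval (2 * c) • ε s + (Chebyshev.S ℝ (n - 1)).eval (2 * c) • ε t
      else
        (Chebyshev.S ℝ (n - 1)).eval (2 * c) • ε s + (Chebyshev.S ℝ n).eval (2 * c) • ε t := by
  induction n with
  | zero => simp [alternatingWord]
  | succ n ih =>
    have hS := congrArg (eval (2 * c)) (Chebyshev.S_add_one ℝ (n : ℤ))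
    simp only [eval_sub, eval_mul, eval_X] at hS
    rw [alternatingWord_succ', List.map_cons, List.prod_cons, LinearEquiv.mul_apply, ih]
    by_cases hn : Even n
    · simp only [hn, ↓reduceIte, Nat.even_add_one, not_true_eq_false, unitReflection_apply,
        map_add, map_smul, h1, hst]
      push_cast
      rw [hS, add_sub_cancel_right]
      module
    · simp only [hn, ↓reduceIte, Nat.even_add_one, not_false_eq_true, unitReflection_apply,
        map_add, map_smul, h1, hts]
      push_cast
      rw [hS, add_sub_cancel_right]
      module

theorem unitReflection_mul_pow_eq_one {m : ℕ} (hm : 2 ≤ m)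
    (hst : B (ε s) (ε t) = -cos (π / m)) (hts : B (ε t) (ε s) = -cos (π / m)) :
    (unitReflection B (h1 s) * unitReflection B (h1 t)) ^ m = 1 := by
  set r := fun i => unitReflection B (h1 i)
  obtain ⟨hS₁, hS₀⟩ := Chebyshev.S_eval_two_mul_cos_pi_div hm
  have fix_first : ∀ {i j : S}, B (ε i) (ε j) = -cos (π / m) → B (ε j) (ε i) = -cos (π / m) →
      ((r i * r j) ^ m) (ε i) = ε i := by
    intro i j hij hji
    rw [← prod_map_alternatingWord_two_mul r,
      prod_map_unitReflection_alternatingWord_apply B h1 hij hji, if_pos (by simp)]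
    push_cast
    simp [hS₁, hS₀]
  have hinv : (r s * r t) ^ m = ((r t * r s) ^ m)⁻¹ := by
    rw [← inv_pow, mul_inv_rev, unitReflection_inv, unitReflection_inv]
  have hcos : cos (π / m) ^ 2 ≠ 1 := by
    have := sin_pi_div_natCast_pos hm
    nlinarith [sin_sq_add_cos_sq (π / m)]
  refine eq_one_of_fixes_of_orthogonal B (h1 s) (h1 t) hst hts hcos _ (fix_first hst hts) ?_ ?_
  · rw [hinv]
    exact ((r t * r s) ^ m).symm_apply_eq.mpr (fix_first hts hst).symm
  · intro x hxs hxt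
    rw [LinearEquiv.pow_apply]
    exact Function.iterate_fixed (by simp [unitReflection_apply_of_orthogonal, hxs, hxt]) m

end Dihedral

namespace CoxeterFixedPoints

section RootedRepresentation

variable {S W V : Type*} [Group W] [AddCommGroup V] [Module ℝ V] {M : CoxeterMatrix S}
  {B : V →ₗ[ℝ] V →ₗ[ℝ] ℝ} {ε : S → V}

def IsRootBasis.reflection (hrb : IsRootBasis M B ε) (s : S) : V ≃ₗ[ℝ] V :=
  unitReflection B (hrb.2.1 s)

theorem IsRootBasis.reflection_apply (hrb : IsRootBasis M B ε) (s : S) (x : V) :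
    hrb.reflection s x = x - (2 * B x (ε s)) • ε s :=
  unitReflection_apply B _ x

theorem IsRootBasis.isLiftable_reflection (hrb : IsRootBasis M B ε) :
    M.IsLiftable hrb.reflection := by
  obtain ⟨hsym, h1, hfin, -⟩ := hrb
  intro s t
  rcases eq_or_ne s t with rfl | hst
  · rw [M.diagonal, pow_one]
    exact unitReflection_mul_self B (h1 s)
  rcases eq_or_ne (M s t) 0 with h0 | h0
  · rw [h0, pow_zero]
  have hm : 2 ≤ M s t := by have := M.off_diagonal s t hst; omega
  exact unitReflection_mul_pow_eq_one B h1 hm (hfin s t hst h0) (hsym _ _ ▸ hfin s t hst h0)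

theorem IsRootBasis.exists_prod_alternatingWord_apply (hrb : IsRootBasis M B ε) {s t : S}
    (hst : s ≠ t) {n : ℕ} (hn : M s t = 0 ∨ n + 1 ≤ M s t) :
    ∃ a b : ℝ, 0 ≤ a ∧ 0 ≤ b ∧
      ((alternatingWord s t n).map hrb.reflection).prod (ε s) = a • ε s + b • ε t := by
  obtain ⟨hsym, h1, hfin, hinf, -⟩ := hrb
  set c := -B (ε s) (ε t)
  have hcoeff : ∀ k : ℤ, -1 ≤ k → k ≤ n → 0 ≤ (Chebyshev.S ℝ k).eval (2 * c) := by
    intro k hk hkn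
    rcases hn with h0 | hnm
    · exact Chebyshev.S_eval_nonneg_of_two_le (by linarith [hinf s t hst h0]) hk
    · have h0 : M s t ≠ 0 := by omega
      rw [show c = cos (π / M s t) by simp [c, hfin s t hst h0]]
      exact Chebyshev.S_eval_two_mul_cos_pi_div_nonneg (by have := M.off_diagonal s t hst; omega)
        hk (by omega)
  have h := prod_map_unitReflection_alternatingWord_apply B h1 (s := s) (t := t) (c := c)
    (by simp [c]) (by simp [c, hsym (ε t)]) n
  split_ifs at h
  · exact ⟨_, _, hcoeff n (by omega) le_rfl, hcoeff (n - 1) (by omega) (by omega), h⟩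
  · exact ⟨_, _, hcoeff (n - 1) (by omega) (by omega), hcoeff n (by omega) le_rfl, h⟩

def rootedRepresentation (hrb : IsRootBasis M B ε) (cs : CoxeterSystem M W) :
    W →* (V ≃ₗ[ℝ] V) :=
  cs.lift ⟨hrb.reflection, hrb.isLiftable_reflection⟩

variable (hrb : IsRootBasis M B ε) (cs : CoxeterSystem M W)

theorem rootedRepresentation_simple (s : S) :
    rootedRepresentation hrb cs (cs.simple s) = hrb.reflection s :=
  cs.lift_apply_simple _ s

theorem rootedRepresentation_wordProd (ω : List S) :
    rootedRepresentation hrb cs (cs.wordProd ω) = (ω.map hrb.reflection).prod := by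
  simp [CoxeterSystem.wordProd, map_list_prod, Function.comp_def, rootedRepresentation_simple]

theorem rootedRepresentation_apply_mem_hull {w : W} {s : S} (hws : ¬ cs.IsRightDescent w s) :
    rootedRepresentation hrb cs w (ε s) ∈ PointedCone.hull ℝ (Set.range ε) := by
  induction hn : cs.length w using Nat.strong_induction_on generalizing w s with
  | _ n ih =>
  rcases eq_or_ne w 1 with rfl | hw1
  · simpa using PointedCone.subset_hull (Set.mem_range_self s)
  obtain ⟨t, ht⟩ := cs.exists_rightDescent_of_ne_one hw1
  have hst : s ≠ t := by rintro rfl; exact hws ht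
  obtain ⟨v, ω, hω, hw, hl, hvs, hvt⟩ := cs.exists_eq_mul_wordProd_pair_not_isRightDescent w s t
  have hωne : ω ≠ [] := by
    rintro rfl
    rw [wordProd_nil, mul_one] at hw
    exact hvt (hw ▸ ht)
  have hv : cs.length v < n := by
    have := List.length_pos_iff.mpr hωne
    omega
  have hred := cs.isReduced_append_of_not_isRightDescent hw hl hws
  have halt := cs.eq_alternatingWord_of_isReduced_append ω hω hred
  have hlen : M s t = 0 ∨ ω.length + 1 ≤ M s t := by
    by_contra! h
    refine cs.not_isReduced_alternatingWord t s (M.symmetric s t ▸ h.1)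
      (M.symmetric s t ▸ h.2) ?_
    rwa [alternatingWord_succ, ← halt, List.concat_eq_append]
  obtain ⟨a, b, ha, hb, hab⟩ := hrb.exists_prod_alternatingWord_apply hst hlen
  rw [hw, map_mul, LinearEquiv.mul_apply, rootedRepresentation_wordProd, halt, hab, map_add,
    map_smul, map_smul]
  exact add_mem (PointedCone.smul_mem _ ha (ih _ hv hvs rfl))
    (PointedCone.smul_mem _ hb (ih _ hv hvt rfl))

theorem rootedRepresentation_injective : Function.Injective (rootedRepresentation hrb cs) := by
  obtain ⟨-, h1, -, -, χ, hχ⟩ := id hrb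
  rw [injective_iff_map_eq_one]
  intro w hw
  by_contra hw1
  obtain ⟨s, hs⟩ := cs.exists_rightDescent_of_ne_one hw1
  have hmem := rootedRepresentation_apply_mem_hull hrb cs
    (cs.isRightDescent_iff_not_isRightDescent_mul.mp hs)
  rw [map_mul, hw, one_mul, rootedRepresentation_simple, hrb.reflection_apply, h1] at hmem
  refine neg_notMem_hull_range χ hχ s ?_
  convert hmem using 1
  module

end RootedRepresentation

theorem rooted_representation_exists_and_faithful_general
    {S W V : Type*} [Group W]
    [AddCommGroup V] [Module ℝ V]
    (M : CoxeterMatrix S) (cs : CoxeterSystem M W)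
    (B : V →ₗ[ℝ] V →ₗ[ℝ] ℝ) (ε : S → V) (hrb : IsRootBasis M B ε) :
    ∃ f : W →* (V ≃ₗ[ℝ] V),
      (∀ (s : S) (x : V), f (cs.simple s) x = x - (2 * B x (ε s)) • ε s) ∧
      Function.Injective f :=
  ⟨rootedRepresentation hrb cs,
    fun s x => by rw [rootedRepresentation_simple, hrb.reflection_apply],
    rootedRepresentation_injective hrb cs⟩

/-- the rooted representation exists and is faithful. -/
theorem rooted_representation_exists_and_faithful
    {S W V : Type*} [Fintype S] [Group W]
    [AddCommGroup V] [Module ℝ V] [FiniteDimensional ℝ V]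
    (M : CoxeterMatrix S) (cs : CoxeterSystem M W)
    (B : V →ₗ[ℝ] V →ₗ[ℝ] ℝ) (ε : S → V) (hrb : IsRootBasis M B ε) :
    ∃ f : W →* (V ≃ₗ[ℝ] V),
      (∀ (s : S) (x : V), f (cs.simple s) x = x - (2 * B x (ε s)) • ε s) ∧
      Function.Injective f :=
  rooted_representation_exists_and_faithful_general M cs B ε hrb

end CoxeterFixedPoints
end
end

section
/- Let (V, ⟨·,·⟩, Π) be a root basis of Γ such that W is finite and Π spans V. Then ⟨·,·⟩ is a scalar product on V (i.e., positive definite), ⟨ε_s,ε_t⟩ = −cos(π/m_{s,t}) for all s,t∈S (all m_{s,t} being finite since W is finite), and Π is a basis of V; that is, (V, ⟨·,·⟩, Π) is the canonical root basis of Γ. -/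
noncomputable section

open Real

namespace CoxeterFixedPoints

section Aux
variable {V : Type*} [AddCommGroup V] [Module ℝ V]

def reflB (B : V →ₗ[ℝ] V →ₗ[ℝ] ℝ) (v : V) : Module.End ℝ V :=
  LinearMap.id - (2 : ℝ) • (B v).smulRight v

lemma reflB_apply (B : V →ₗ[ℝ] V →ₗ[ℝ] ℝ) (v x : V) :
    reflB B v x = x - (2 * B v x) • v := by
  simp [reflB, LinearMap.smulRight_apply, sub_eq_iff_eq_add, mul_smul]

lemma reflB_fix {B : V →ₗ[ℝ] V →ₗ[ℝ] ℝ} {v x : V} (h : B v x = 0) :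
    reflB B v x = x := by simp [reflB_apply, h]

lemma L_es1 (x t : ℝ) : sin (2*(x+1)*t + t)
    = (4*(cos t)^2 - 1) * sin (2*x*t + t) - 2*(cos t)*sin (2*x*t) := by
  rw [show 2*(x+1)*t + t = 2*x*t + t + t + t by ring]
  simp only [Real.sin_add, Real.cos_add]
  linear_combination (-(3*Real.cos t*Real.sin (2*x*t) + Real.cos (2*x*t)*Real.sin t))
    * Real.sin_sq_add_cos_sq t

lemma L_es2 (x t : ℝ) : sin (2*(x+1)*t)
    = 2*(cos t) * sin (2*x*t + t) - sin (2*x*t) := by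
  rw [show 2*(x+1)*t = 2*x*t + t + t by ring]
  simp only [Real.sin_add, Real.cos_add]
  linear_combination (-Real.sin (2*x*t)) * Real.sin_sq_add_cos_sq t

lemma L_et1 (x t : ℝ) : sin (2*(x+1)*t)
    = (4*(cos t)^2 - 1) * sin (2*x*t) - 2*(cos t)*sin (2*x*t - t) := by
  rw [show 2*(x+1)*t = 2*x*t + t + t by ring]
  simp only [Real.sin_add, Real.cos_add, Real.sin_sub, Real.cos_sub]
  linear_combination (-Real.sin (2*x*t)) * Real.sin_sq_add_cos_sq t

lemma L_et2 (x t : ℝ) : sin (2*(x+1)*t - t)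
    = 2*(cos t) * sin (2*x*t) - sin (2*x*t - t) := by
  rw [show 2*(x+1)*t - t = 2*x*t + t by ring]
  simp only [Real.sin_add, Real.sin_sub]
  ring

lemma reflB_mul_es {B : V →ₗ[ℝ] V →ₗ[ℝ] ℝ} (hsym : ∀ x y : V, B x y = B y x)
    {es et : V} (hs : B es es = 1) {C : ℝ} (hc : B es et = - C) :
    (reflB B es * reflB B et) es = (4 * C^2 - 1) • es + (2*C) • et := by
  have hts : B et es = - C := (hsym et es).trans hc
  rw [Module.End.mul_apply, reflB_apply B et, hts, reflB_apply, map_sub, map_smul, hs, hc]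
  simp only [smul_eq_mul, mul_one]
  module

lemma reflB_mul_et {B : V →ₗ[ℝ] V →ₗ[ℝ] ℝ} (hsym : ∀ x y : V, B x y = B y x)
    {es et : V} (ht : B et et = 1) {C : ℝ} (hc : B es et = - C) :
    (reflB B es * reflB B et) et = (-(2 * C)) • es + (-1 : ℝ) • et := by
  rw [Module.End.mul_apply, reflB_apply B et, ht, reflB_apply, map_sub, map_smul, hc]
  simp only [smul_eq_mul, mul_one]
  module

lemma reflB_mul_pow_order {B : V →ₗ[ℝ] V →ₗ[ℝ] ℝ} (hsym : ∀ x y : V, B x y = B y x)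
    {es et : V} (hs : B es es = 1) (ht : B et et = 1) {m : ℕ} (hm : 2 ≤ m)
    (hc : B es et = - Real.cos (π / m)) :
    (reflB B es * reflB B et) ^ m = 1 := by
  have hm0 : (m : ℝ) ≠ 0 := by positivity
  set θ : ℝ := π / m with hθ
  have hθ0 : 0 < θ := by positivity
  have hθπ : θ < π := by
    have hm2 : (2:ℝ) ≤ m := by exact_mod_cast hm
    rw [hθ, div_lt_iff₀ (by positivity)]
    nlinarith [Real.pi_pos, mul_le_mul_of_nonneg_left hm2 Real.pi_pos.le]
  have hS : 0 < Real.sin θ := Real.sin_pos_of_pos_of_lt_pi hθ0 hθπ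
  set h : Module.End ℝ V := reflB B es * reflB B et with hh
  have hes : h es = (4 * (Real.cos θ)^2 - 1) • es + (2*Real.cos θ) • et :=
    reflB_mul_es hsym hs hc
  have het : h et = (-(2 * Real.cos θ)) • es + (-1 : ℝ) • et :=
    reflB_mul_et hsym ht hc
  have key : ∀ n : ℕ,
      (Real.sin θ) • ((h ^ n) es)
        = (Real.sin (2*n*θ + θ)) • es + (Real.sin (2*n*θ)) • et
      ∧ (Real.sin θ) • ((h ^ n) et)
        = (-(Real.sin (2*n*θ))) • es + (-(Real.sin (2*n*θ - θ))) • et := by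
    intro n
    induction n with
    | zero =>
      constructor
      · norm_num
      · norm_num [Real.sin_neg]
    | succ n ih =>
      have e1 := L_es1 (n : ℝ) θ
      have e2 := L_es2 (n : ℝ) θ
      have e3 := L_et1 (n : ℝ) θ
      have e4 := L_et2 (n : ℝ) θ
      have hpow : ∀ y : V, (h ^ (n+1)) y = h ((h ^ n) y) := by
        intro y; rw [pow_succ', Module.End.mul_apply]
      constructor
      · rw [hpow, ← map_smul, ih.1, map_add, map_smul, map_smul, hes, het]
        push_cast
        rw [e1, e2]
        match_scalars <;> ring
      · rw [hpow, ← map_smul, ih.2, map_add, map_smul, map_smul, hes, het]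
        push_cast
        rw [e3, e4]
        match_scalars <;> ring
  have h2π : 2*(m:ℝ)*θ = 2*π := by rw [hθ]; field_simp
  have hfes : (h ^ m) es = es := by
    have := (key m).1
    rw [h2π, show 2*π + θ = θ + 2*π by ring, Real.sin_add_two_pi, Real.sin_two_pi] at this
    simp only [zero_smul, add_zero] at this
    exact smul_right_injective V hS.ne' this
  have hfet : (h ^ m) et = et := by
    have hsin : Real.sin (2*π - θ) = - Real.sin θ := by
      rw [Real.sin_sub, Real.sin_two_pi, Real.cos_two_pi]; ring
    have := (key m).2
    rw [h2π, Real.sin_two_pi, hsin, neg_neg, neg_zero] at this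
    simp only [zero_smul, zero_add] at this
    exact smul_right_injective V hS.ne' this
  have hD : (0:ℝ) < 1 - (B es et)^2 := by
    rw [hc]
    nlinarith [Real.sin_sq_add_cos_sq θ, hS]
  ext x
  set c : ℝ := B es et with hcdef
  have hts : B et es = c := hsym et es
  set a : ℝ := B es x with ha
  set b : ℝ := B et x with hb
  set α : ℝ := (a - c*b)/(1 - c^2) with hα
  set β : ℝ := (b - c*a)/(1 - c^2) with hβ
  set k : V := x - (α • es + β • et) with hk
  have hka : B es k = 0 := by
    simp only [hk, map_sub, map_add, map_smul, smul_eq_mul, ← ha, hs, ← hcdef, hα, hβ]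
    field_simp
    ring
  have hkb : B et k = 0 := by
    simp only [hk, map_sub, map_add, map_smul, smul_eq_mul, ← hb, ht, hts, hα, hβ]
    field_simp
    ring
  have hkfix : h k = k := by
    rw [hh, Module.End.mul_apply, reflB_fix hkb, reflB_fix hka]
  have hkpow : (h ^ m) k = k := by
    rw [Module.End.pow_apply]
    exact Function.iterate_fixed hkfix m
  have hx : x = α • es + β • et + k := by rw [hk]; abel
  rw [Module.End.one_apply, hx, map_add, map_add, map_smul, map_smul, hfes, hfet, hkpow]

lemma reflB_neg {B : V →ₗ[ℝ] V →ₗ[ℝ] ℝ} {v : V} (hv : B v v = 1) :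
    reflB B v v = -v := by
  rw [reflB_apply, hv]; module

lemma reflB_invol {B : V →ₗ[ℝ] V →ₗ[ℝ] ℝ} {v : V} (hv : B v v = 1) (x : V) :
    reflB B v (reflB B v x) = x := by
  rw [reflB_apply, reflB_apply]
  rw [map_sub, map_smul, hv]
  simp only [smul_eq_mul, mul_one]
  module

lemma reflB_isometry {B : V →ₗ[ℝ] V →ₗ[ℝ] ℝ} (hsym : ∀ x y : V, B x y = B y x)
    {v : V} (hv : B v v = 1) (x y : V) :
    B (reflB B v x) (reflB B v y) = B x y := by
  simp only [reflB_apply, map_sub, map_smul, LinearMap.sub_apply, LinearMap.smul_apply,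
    smul_eq_mul, hv]
  linear_combination (2 * B v y) * (hsym v x)

lemma reflB_mul_pow_ne {B : V →ₗ[ℝ] V →ₗ[ℝ] ℝ} (hsym : ∀ x y : V, B x y = B y x)
    {es et : V} (hs : B es es = 1) (ht : B et et = 1) (hc : B es et ≤ -1)
    (χ : V →ₗ[ℝ] ℝ) (hχs : 0 < χ es) (hχt : 0 < χ et)
    {n : ℕ} (hn : 0 < n) : ((reflB B es * reflB B et) ^ n) es ≠ es := by
  set C : ℝ := -(B es et) with hC
  have hC1 : 1 ≤ C := by rw [hC]; linarith
  have hc' : B es et = - C := by rw [hC, neg_neg]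
  set h : Module.End ℝ V := reflB B es * reflB B et with hh
  have hes : h es = (4 * C^2 - 1) • es + (2*C) • et := reflB_mul_es hsym hs hc'
  have het : h et = (-(2 * C)) • es + (-1 : ℝ) • et := reflB_mul_et hsym ht hc'
  obtain ⟨F, hF0, hFs⟩ : ∃ F : ℕ → ℝ × ℝ, F 0 = (1, 0) ∧
      ∀ k, F (k+1) = ((4*C^2-1)*(F k).1 - 2*C*(F k).2, 2*C*(F k).1 - (F k).2) :=
    ⟨fun k => Nat.rec ((1:ℝ), (0:ℝ))
      (fun _ pq => ((4*C^2-1)*pq.1 - 2*C*pq.2, 2*C*pq.1 - pq.2)) k, rfl, fun _ => rfl⟩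
  have key : ∀ k : ℕ, (h ^ k) es = (F k).1 • es + (F k).2 • et
      ∧ (F k).2 + 1 ≤ (F k).1 ∧ 2*(k:ℝ) ≤ (F k).2 := by
    intro k
    induction k with
    | zero => rw [hF0]; norm_num
    | succ k ih =>
      obtain ⟨h1, h2, h3⟩ := ih
      have hq0 : (0:ℝ) ≤ (F k).2 := le_trans (by positivity) h3
      refine ⟨?_, ?_, ?_⟩
      · rw [pow_succ', Module.End.mul_apply, h1, map_add, map_smul, map_smul, hes, het, hFs]
        match_scalars <;> ring
      · rw [hFs]
        simp only
        nlinarith [sq_nonneg C, sq_nonneg (C-1)]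
      · rw [hFs]
        simp only
        push_cast
        nlinarith
  intro heq
  obtain ⟨h1, h2, h3⟩ := key n
  have hQ : (0:ℝ) < (F n).2 := by
    have hn1 : (1:ℝ) ≤ (n:ℝ) := by exact_mod_cast hn
    linarith
  rw [heq] at h1
  have h4 : (F n).2 • et = (1 - (F n).1) • es := by
    linear_combination (norm := module) (-1 : ℝ) • h1
  have hlam : et = ((F n).2⁻¹ * (1 - (F n).1)) • es := by
    have := congrArg (fun v : V => (F n).2⁻¹ • v) h4
    simpa [smul_smul, inv_mul_cancel₀ hQ.ne'] using this
  set lam : ℝ := (F n).2⁻¹ * (1 - (F n).1) with hlamdef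
  have h5 : B es et = lam := by rw [hlam, map_smul, smul_eq_mul, hs, mul_one]
  have h6 : lam * lam = 1 := by
    have h7 := ht
    rw [hlam] at h7
    simp only [map_smul, LinearMap.smul_apply, smul_eq_mul, hs] at h7
    linarith [h7]
  have hlamle : lam ≤ -1 := by rw [← h5]; exact hc
  have hlam1 : lam = -1 := by nlinarith
  have : χ et = lam * χ es := by rw [hlam, map_smul, smul_eq_mul]
  rw [hlam1] at this
  linarith


lemma bilin_sum {ι : Type*} (C : V →ₗ[ℝ] V →ₗ[ℝ] ℝ) (A A' : Finset ι) (f g : ι → ℝ) (v w : ι → V) :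
    C (∑ s ∈ A, f s • v s) (∑ t ∈ A', g t • w t)
      = ∑ s ∈ A, ∑ t ∈ A', f s * g t * C (v s) (w t) := by
  simp only [map_sum, map_smul, LinearMap.coe_sum, Finset.sum_apply,
    LinearMap.smul_apply, smul_eq_mul, Finset.mul_sum]
  rw [Finset.sum_comm]
  exact Finset.sum_congr rfl fun s _ => Finset.sum_congr rfl fun t _ => by ring

lemma bilin_sum' {ι : Type*} (C : V →ₗ[ℝ] V →ₗ[ℝ] ℝ) (A A' : Finset ι) (v w : ι → V) :
    C (∑ s ∈ A, v s) (∑ t ∈ A', w t) = ∑ s ∈ A, ∑ t ∈ A', C (v s) (w t) := by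
  simp only [map_sum, LinearMap.coe_sum, Finset.sum_apply]
  exact Finset.sum_comm

lemma bilin_sum₁ {ι : Type*} (C : V →ₗ[ℝ] V →ₗ[ℝ] ℝ) (A : Finset ι) (f : ι → ℝ) (v : ι → V) (x : V) :
    C (∑ s ∈ A, f s • v s) x = ∑ s ∈ A, f s * C (v s) x := by
  simp only [map_sum, map_smul, LinearMap.coe_sum, Finset.sum_apply,
    LinearMap.smul_apply, smul_eq_mul]

end Aux

/-- if `W` is finite and `Π` spans `V`, then the root basis is the
canonical one : the form is positive definite, all `m_{s,t}` are finite,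
`⟨ε_s, ε_t⟩ = -cos (π / m_{s,t})` for all `s, t`, and `Π` is a basis of `V`. -/
theorem root_basis_canonical_of_finite
    {S W V : Type*} [Fintype S] [Group W] [Finite W]
    [AddCommGroup V] [Module ℝ V] [FiniteDimensional ℝ V]
    (M : CoxeterMatrix S) (cs : CoxeterSystem M W)
    (B : V →ₗ[ℝ] V →ₗ[ℝ] ℝ) (ε : S → V) (hrb : IsRootBasis M B ε)
    (hspan : Submodule.span ℝ (Set.range ε) = ⊤) :
    (∀ x : V, x ≠ 0 → 0 < B x x) ∧
    (∀ s t : S, M s t ≠ 0) ∧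
    (∀ s t : S, B (ε s) (ε t) = - Real.cos (Real.pi / (M s t : ℝ))) ∧
    LinearIndependent ℝ ε := by
  classical
  obtain ⟨hsym, hone, hcosm, hinfty, χ, hχ⟩ := hrb
  have _inst : Fintype W := Fintype.ofFinite W
  -- the reflections as linear automorphisms
  have hinvol : ∀ s : S, (reflB B (ε s)).comp (reflB B (ε s)) = LinearMap.id := by
    intro s
    ext x
    simpa using reflB_invol (hone s) x
  let σ : S → (V ≃ₗ[ℝ] V) := fun s =>
    LinearEquiv.ofLinear (reflB B (ε s)) (reflB B (ε s)) (hinvol s) (hinvol s)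
  have hσlin : ∀ s, (σ s).toLinearMap = reflB B (ε s) := fun s => rfl
  have hσapp : ∀ s x, (σ s) x = reflB B (ε s) x := fun s x => rfl
  have hm2 : ∀ s t : S, s ≠ t → M s t ≠ 0 → 2 ≤ M s t := by
    intro s t hst h0
    have := M.off_diagonal s t hst
    omega
  have hpairs : ∀ s t : S, s ≠ t → M s t ≠ 0 →
      (reflB B (ε s) * reflB B (ε t)) ^ (M s t) = 1 := by
    intro s t hst h0
    exact reflB_mul_pow_order hsym (hone s) (hone t) (hm2 s t hst h0) (hcosm s t hst h0)
  have hlift : CoxeterMatrix.IsLiftable M σ := by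
    intro s t
    by_cases hst : s = t
    · subst hst
      rw [M.diagonal, pow_one]
      apply LinearEquiv.toLinearMap_injective
      have : (σ s * σ s).toLinearMap = (reflB B (ε s)).comp (reflB B (ε s)) := rfl
      rw [this, hinvol s]
      rfl
    · by_cases h0 : M s t = 0
      · rw [h0, pow_zero]
      · apply LinearEquiv.toLinearMap_injective
        have hcoe : ((σ s * σ t) ^ (M s t)).toLinearMap
            = (reflB B (ε s) * reflB B (ε t)) ^ (M s t) := by
          rw [← hσlin s, ← hσlin t]
          exact map_pow (LinearEquiv.automorphismGroup.toLinearMapMonoidHom) (σ s * σ t) (M s t)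
        rw [hcoe, hpairs s t hst h0]
        rfl
  let ρ : W →* (V ≃ₗ[ℝ] V) := cs.lift ⟨σ, hlift⟩
  have hρs : ∀ s, ρ (cs.simple s) = σ s := fun s => cs.lift_apply_simple hlift s
  have hρσ : ∀ s (x : V), ρ (cs.simple s) x = reflB B (ε s) x := by
    intro s x
    rw [hρs s]
    exact hσapp s x
  -- STEP 1 : all the m s t are finite
  have hM0 : ∀ s t : S, M s t ≠ 0 := by
    intro s t
    by_cases hst : s = t
    · subst hst; rw [M.diagonal]; exact one_ne_zero
    intro h0
    have hc : B (ε s) (ε t) ≤ -1 := hinfty s t hst h0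
    have hNpos : 0 < Nat.card W := Nat.card_pos
    have hp : (cs.simple s * cs.simple t) ^ (Nat.card W) = 1 := pow_card_eq_one'
    have hρp : ((σ s * σ t) : V ≃ₗ[ℝ] V) ^ (Nat.card W) = 1 := by
      rw [← hρs s, ← hρs t, ← map_mul, ← map_pow, hp, map_one]
    have hcoe : ((σ s * σ t) ^ (Nat.card W)).toLinearMap
        = (reflB B (ε s) * reflB B (ε t)) ^ (Nat.card W) := by
      rw [← hσlin s, ← hσlin t]
      exact map_pow (LinearEquiv.automorphismGroup.toLinearMapMonoidHom) (σ s * σ t) _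
    have hEnd : ((reflB B (ε s) * reflB B (ε t)) ^ (Nat.card W)) (ε s) = ε s := by
      rw [← hcoe, hρp]
      rfl
    exact reflB_mul_pow_ne hsym (hone s) (hone t) hc χ (hχ s) (hχ t) hNpos hEnd
  -- the invariant positive definite form
  let b := Module.finBasis ℝ V
  let B₀ : V →ₗ[ℝ] V →ₗ[ℝ] ℝ := ∑ i, (b.coord i).smulRight (b.coord i)
  have hB₀ : ∀ x y : V, B₀ x y = ∑ i, b.coord i x * b.coord i y := by
    intro x y
    simp [B₀, LinearMap.sum_apply, LinearMap.smulRight_apply, smul_eq_mul]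
  have hB₀nonneg : ∀ x : V, 0 ≤ B₀ x x := by
    intro x
    rw [hB₀]
    exact Finset.sum_nonneg (fun i _ => mul_self_nonneg _)
  have hB₀pos : ∀ x : V, x ≠ 0 → 0 < B₀ x x := by
    intro x hx
    rw [hB₀]
    obtain ⟨i, hi⟩ : ∃ i, b.coord i x ≠ 0 := by
      by_contra hall
      push_neg at hall
      exact hx (b.forall_coord_eq_zero_iff.1 hall)
    exact Finset.sum_pos' (fun i _ => mul_self_nonneg _)
      ⟨i, Finset.mem_univ i, mul_self_pos.2 hi⟩
  have hB₀symm : ∀ x y : V, B₀ x y = B₀ y x := by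
    intro x y
    rw [hB₀, hB₀]
    exact Finset.sum_congr rfl (fun i _ => mul_comm _ _)
  let NN : V →ₗ[ℝ] V →ₗ[ℝ] ℝ := ∑ w : W, B₀.compl₁₂ (ρ w).toLinearMap (ρ w).toLinearMap
  have hNN : ∀ x y : V, NN x y = ∑ w : W, B₀ (ρ w x) (ρ w y) := by
    intro x y
    simp [NN, LinearMap.sum_apply, LinearMap.compl₁₂_apply]
  have hNNnonneg : ∀ x : V, 0 ≤ NN x x := by
    intro x
    rw [hNN]
    exact Finset.sum_nonneg (fun w _ => hB₀nonneg _)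
  have hNNpos : ∀ x : V, x ≠ 0 → 0 < NN x x := by
    intro x hx
    rw [hNN]
    refine Finset.sum_pos' (fun w _ => hB₀nonneg _) ⟨1, Finset.mem_univ 1, ?_⟩
    rw [map_one]
    exact hB₀pos x hx
  have hNNzero : ∀ x : V, NN x x = 0 → x = 0 := by
    intro x hx
    by_contra hne
    exact absurd hx (ne_of_gt (hNNpos x hne))
  have hNNsymm : ∀ x y : V, NN x y = NN y x := by
    intro x y
    rw [hNN, hNN]
    exact Finset.sum_congr rfl (fun w _ => hB₀symm _ _)
  have hNNinv : ∀ (u : W) (x y : V), NN (ρ u x) (ρ u y) = NN x y := by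
    intro u x y
    rw [hNN, hNN]
    rw [← Equiv.sum_comp (Equiv.mulRight u) (fun w => B₀ (ρ w x) (ρ w y))]
    refine Finset.sum_congr rfl (fun w _ => ?_)
    have h1 : ρ (Equiv.mulRight u w) x = ρ w (ρ u x) := by
      simp only [Equiv.coe_mulRight, map_mul]
      rfl
    have h2 : ρ (Equiv.mulRight u w) y = ρ w (ρ u y) := by
      simp only [Equiv.coe_mulRight, map_mul]
      rfl
    rw [h1, h2]
  -- the key identity : N(εₛ, ·) is proportional to B(εₛ, ·)
  have hεne : ∀ s, ε s ≠ 0 := by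
    intro s h
    have := hone s
    rw [h] at this
    simp at this
  have hμpos : ∀ s, 0 < NN (ε s) (ε s) := fun s => hNNpos _ (hεne s)
  have keyN : ∀ (s : S) (x : V), NN (ε s) x = NN (ε s) (ε s) * B (ε s) x := by
    intro s x
    set y := x - (B (ε s) x) • ε s with hy
    have hBy : B (ε s) y = 0 := by
      rw [hy, map_sub, map_smul, smul_eq_mul, hone s, mul_one, sub_self]
    have hσy : ρ (cs.simple s) y = y := by rw [hρσ]; exact reflB_fix hBy
    have hσe : ρ (cs.simple s) (ε s) = -(ε s) := by rw [hρσ]; exact reflB_neg (hone s)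
    have h0 : NN (ε s) y = 0 := by
      have h1 := hNNinv (cs.simple s) (ε s) y
      rw [hσy, hσe] at h1
      rw [map_neg] at h1
      simp only [LinearMap.neg_apply] at h1
      linarith
    have hxy : x = y + (B (ε s) x) • ε s := by rw [hy]; abel
    calc NN (ε s) x = NN (ε s) (y + (B (ε s) x) • ε s) := by rw [← hxy]
      _ = NN (ε s) y + (B (ε s) x) * NN (ε s) (ε s) := by
          rw [map_add, map_smul, smul_eq_mul]
      _ = NN (ε s) (ε s) * B (ε s) x := by rw [h0]; ring
  have hcross : ∀ s t : S, NN (ε s) (ε s) ≠ NN (ε t) (ε t) → B (ε s) (ε t) = 0 := by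
    intro s t hne
    have h1 : NN (ε s) (ε s) * B (ε s) (ε t) = NN (ε t) (ε t) * B (ε s) (ε t) := by
      rw [← keyN s (ε t), hNNsymm, keyN t (ε s), hsym (ε t) (ε s)]
    by_contra hB
    exact hne (mul_right_cancel₀ hB h1)
  -- STEP 2 : positive definiteness
  have hBpos : ∀ x : V, x ≠ 0 → 0 < B x x := by
    intro x hx
    obtain ⟨cf, hcf⟩ : ∃ cf : S → ℝ, ∑ s, cf s • ε s = x := by
      rw [← Submodule.mem_span_range_iff_exists_fun ℝ, hspan]
      exact Submodule.mem_top
    set μ : S → ℝ := fun s => NN (ε s) (ε s) with hμdef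
    set R : Finset ℝ := Finset.univ.image μ with hR
    set y : ℝ → V := fun r => ∑ s ∈ Finset.univ.filter (fun s => μ s = r), cf s • ε s with hy
    have hxy : ∑ r ∈ R, y r = x := by
      rw [← hcf]
      exact Finset.sum_fiberwise_of_maps_to (fun s _ => Finset.mem_image_of_mem μ
        (Finset.mem_univ s)) _
    have hBcross : ∀ r r' : ℝ, r ≠ r' → B (y r) (y r') = 0 := by
      intro r r' hrr
      simp only [hy]
      rw [bilin_sum]
      refine Finset.sum_eq_zero (fun s hs => ?_)
      refine Finset.sum_eq_zero (fun t ht => ?_)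
      have hμs : μ s = r := (Finset.mem_filter.1 hs).2
      have hμt : μ t = r' := (Finset.mem_filter.1 ht).2
      simp only [hμdef] at hμs hμt
      rw [hcross s t (by rw [hμs, hμt]; exact hrr), mul_zero]
    have hNyr : ∀ r : ℝ, NN (y r) (y r) = r * B (y r) (y r) := by
      intro r
      simp only [hy]
      rw [bilin_sum, bilin_sum, Finset.mul_sum]
      refine Finset.sum_congr rfl (fun s hs => ?_)
      rw [Finset.mul_sum]
      refine Finset.sum_congr rfl (fun t ht => ?_)
      have hμs : μ s = r := (Finset.mem_filter.1 hs).2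
      simp only [hμdef] at hμs
      rw [keyN s (ε t), hμs]
      ring
    have hterm : ∀ r ∈ R, 0 ≤ B (y r) (y r) := by
      intro r hr
      obtain ⟨s, _, hs⟩ := Finset.mem_image.1 hr
      have hrpos : 0 < r := hs ▸ hμpos s
      have hNy := hNyr r
      nlinarith [hNNnonneg (y r)]
    have hBxx : B x x = ∑ r ∈ R, B (y r) (y r) := by
      conv_lhs => rw [← hxy]
      rw [bilin_sum']
      refine Finset.sum_congr rfl (fun r hr => ?_)
      exact Finset.sum_eq_single_of_mem r hr
        (fun r' _ hne => hBcross r r' (Ne.symm hne))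
    have hge : 0 ≤ B x x := hBxx ▸ Finset.sum_nonneg hterm
    rcases lt_or_eq_of_le hge with h | h
    · exact h
    · exfalso
      have hall : ∀ r ∈ R, B (y r) (y r) = 0 :=
        (Finset.sum_eq_zero_iff_of_nonneg hterm).1 (by rw [← hBxx]; exact h.symm)
      have hyzero : ∀ r ∈ R, y r = 0 := by
        intro r hr
        by_contra hy0
        have h1 := hNNpos (y r) hy0
        rw [hNyr r, hall r hr, mul_zero] at h1
        exact lt_irrefl 0 h1
      exact hx (by rw [← hxy, Finset.sum_eq_zero hyzero])
  -- STEP 3 : the values of the form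
  have hval : ∀ s t : S, B (ε s) (ε t) = - Real.cos (Real.pi / (M s t : ℝ)) := by
    intro s t
    by_cases hst : s = t
    · subst hst
      rw [hone s, M.diagonal]
      norm_num [Real.cos_pi]
    · exact hcosm s t hst (hM0 s t)
  -- off-diagonal entries are nonpositive
  have hoff : ∀ s t : S, s ≠ t → B (ε s) (ε t) ≤ 0 := by
    intro s t hst
    rw [hval s t]
    have h2 : 2 ≤ M s t := hm2 s t hst (hM0 s t)
    have h2' : (2:ℝ) ≤ (M s t : ℝ) := by exact_mod_cast h2
    have hnn : 0 ≤ Real.cos (Real.pi / (M s t : ℝ)) := by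
      apply Real.cos_nonneg_of_mem_Icc
      constructor
      · have : 0 ≤ Real.pi / (M s t : ℝ) := by positivity
        linarith [Real.pi_pos]
      · exact div_le_div_of_nonneg_left Real.pi_pos.le (by norm_num) h2'
    linarith
  -- STEP 4 : linear independence
  have hLI : LinearIndependent ℝ ε := by
    rw [Fintype.linearIndependent_iff]
    intro g hg
    set P : Finset S := Finset.univ.filter (fun s => 0 < g s) with hP
    set x : V := ∑ s ∈ P, g s • ε s with hxdef
    have hsplit : x + ∑ s ∈ Finset.univ.filter (fun s => ¬ 0 < g s), g s • ε s = 0 := by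
      rw [hxdef, Finset.sum_filter_add_sum_filter_not]
      exact hg
    set Qf : Finset S := Finset.univ.filter (fun s => ¬ 0 < g s) with hQf
    have hxneg : x = - ∑ s ∈ Qf, g s • ε s := eq_neg_of_add_eq_zero_left hsplit
    have hBxt : ∀ t ∈ Qf, B x (ε t) ≤ 0 := by
      intro t ht
      rw [hxdef, bilin_sum₁]
      refine Finset.sum_nonpos (fun s hs => ?_)
      have hgs : 0 < g s := (Finset.mem_filter.1 hs).2
      have hst : s ≠ t := by
        intro h
        subst h
        exact (Finset.mem_filter.1 ht).2 hgs
      exact mul_nonpos_iff.2 (Or.inl ⟨hgs.le, hoff s t hst⟩)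
    have hnonneg : ∀ t ∈ Qf, 0 ≤ g t * B x (ε t) := by
      intro t ht
      have hgt : g t ≤ 0 := le_of_not_gt (Finset.mem_filter.1 ht).2
      have h1 := hBxt t ht
      nlinarith
    have hBxxeq : B x x = - ∑ t ∈ Qf, g t * B x (ε t) := by
      nth_rewrite 2 [hxneg]
      rw [map_neg, map_sum]
      simp only [map_smul, smul_eq_mul]
    have hxle : B x x ≤ 0 := by
      rw [hBxxeq]
      have := Finset.sum_nonneg hnonneg
      linarith
    have hx0 : x = 0 := by
      by_contra hxe
      exact absurd hxle (not_le.2 (hBpos x hxe))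
    have hPe : P = ∅ := by
      by_contra hne
      obtain ⟨s0, hs0⟩ := Finset.nonempty_of_ne_empty hne
      have hpos : 0 < ∑ s ∈ P, g s * χ (ε s) :=
        Finset.sum_pos (fun s hs => mul_pos (Finset.mem_filter.1 hs).2 (hχ s)) ⟨s0, hs0⟩
      have heq : ∑ s ∈ P, g s * χ (ε s) = χ x := by
        rw [hxdef, map_sum]
        simp only [map_smul, smul_eq_mul]
      rw [heq, hx0, map_zero] at hpos
      exact lt_irrefl 0 hpos
    have hgle : ∀ s, g s ≤ 0 := by
      intro s
      by_contra hgt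
      have hmem : s ∈ P := Finset.mem_filter.2 ⟨Finset.mem_univ s, lt_of_not_ge hgt⟩
      rw [hPe] at hmem
      exact absurd hmem (Finset.notMem_empty s)
    have hsum0 : ∑ s, g s * χ (ε s) = 0 := by
      have h1 := congrArg χ hg
      rw [map_sum, map_zero] at h1
      simpa [map_smul, smul_eq_mul] using h1
    intro i
    have hall := (Finset.sum_eq_zero_iff_of_nonpos
      (fun s _ => mul_nonpos_iff.2 (Or.inr ⟨hgle s, (hχ s).le⟩))).1 hsum0
    have h2 := hall i (Finset.mem_univ i)
    rcases mul_eq_zero.1 h2 with h | h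
    · exact h
    · exact absurd h (ne_of_gt (hχ i))
  exact ⟨hBpos, hM0, hval, hLI⟩

end CoxeterFixedPoints
end
end

section
/- The fixed subgroup W^G is generated by the set {w_X | X∈𝒮} of longest elements of the finite standard parabolic subgroups corresponding to the orbits of G in S. -/
noncomputable section

open Real

/-! Record, for a word `ω`, the parity of the number of occurrences of each `t ∈ W` in the left
inversion sequence of `ω`, together with `π ω`. This is multiplicative along words into the
semidirect product `(W → ZMod 2) ⋊ W` (`W` acting by conjugating the argument) and respects the
Coxeter relations, so by the universal property of `W` the parities depend only on `π ω`. A left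
descent `s` of `π ω` occurs exactly once in the inversion sequence of a reduced word `s :: ω'` of
`π ω`, hence it occurs in that of `ω`: this is the exchange condition.

With it, if every `s ∈ X` is a left descent of `w`, every `v ∈ W_X` is a prefix of `w` (that is,
`ℓ v + ℓ (v⁻¹ w) = ℓ w`): along a reduced word of `v` in the letters of `X`, each step
`v' ↦ s v'` is an ascent of `v'` while `s` is a descent of `w`, and the exchange condition keeps
`s v'` a prefix. Two consequences: `W_X` is finite, and a longest element of `W_X` has all of
`X` as left descents and is therefore the unique one. So `w_X` is fixed by `G` when `X` is an
orbit; conversely a fixed `w ≠ 1` with a left descent `s` has the whole orbit `X = G s` as left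
descents, so `w = w_X · (w_X⁻¹ w)` with `w_X⁻¹ w` fixed and shorter, and induction on the
length finishes. -/

namespace CoxeterSystem

open List

variable {B W : Type*} [Group W] {M : CoxeterMatrix B} (cs : CoxeterSystem M W)

section InversionParity

open scoped Classical

def conjArrow (W : Type*) [Group W] : W →* MulAut (W → Multiplicative (ZMod 2)) :=
  mulAutArrow.comp ConjAct.toConjAct.toMonoidHom

theorem conjArrow_apply (u : W) (f : W → Multiplicative (ZMod 2)) (t : W) :
    conjArrow W u f t = f (u⁻¹ * t * u) := by
  show f ((ConjAct.toConjAct u)⁻¹ • t) = _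
  rw [← map_inv, ConjAct.toConjAct_smul, inv_inv]

def inversionParity (ω : List B) : (W → Multiplicative (ZMod 2)) ⋊[conjArrow W] W :=
  ⟨fun t => .ofAdd ((cs.leftInvSeq ω).count t : ZMod 2), cs.wordProd ω⟩

theorem inversionParity_nil : cs.inversionParity [] = 1 := rfl

theorem inversionParity_cons (i : B) (ω : List B) :
    cs.inversionParity (i :: ω) = cs.inversionParity [i] * cs.inversionParity ω := by
  refine SemidirectProduct.ext (funext fun t => ?_) (by simp [inversionParity, wordProd_cons])
  have hconj : t = MulAut.conj (cs.simple i) ((cs.simple i)⁻¹ * t * cs.simple i) := by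
    simp [mul_assoc]
  simp only [inversionParity, SemidirectProduct.mul_left, Pi.mul_apply, conjArrow_apply,
    leftInvSeq, count_cons, map_nil, count_nil, wordProd_singleton, ← ofAdd_add]
  conv_lhs => rw [hconj, count_map_of_injective _ _ (MulAut.conj (cs.simple i)).injective, ← hconj]
  rw [zero_add, Nat.cast_add, add_comm]

theorem even_count_leftInvSeq_alternatingWord (i j : B) (t : W) :
    Even ((cs.leftInvSeq (alternatingWord i j (2 * M i j))).count t) := by
  set r : ℕ → W := fun k => cs.wordProd (alternatingWord j i (2 * k + 1))
  have hL : cs.leftInvSeq (alternatingWord i j (2 * M i j)) = (range (2 * M i j)).map r :=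
    ext_getElem (by simp) fun k _ hk => by
      simpa [r] using cs.getElem_leftInvSeq_alternatingWord i j (M i j) k (by simpa using hk)
  have hperiodic : r ∘ (M i j + ·) = r := funext fun k => by
    simp only [Function.comp_apply, r, prod_alternatingWord_eq_mul_pow]
    rw [show (2 * (M i j + k) + 1) / 2 = M i j + k by omega, pow_add, simple_mul_simple_pow',
      one_mul, show (2 * k + 1) / 2 = k by omega]
    simp
  rw [hL, two_mul, range_add, map_append, map_map, count_append, hperiodic]
  exact ⟨_, rfl⟩

theorem isLiftable_inversionParity : M.IsLiftable fun i => cs.inversionParity (W := W) [i] := by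
  intro i j
  have hpow : ∀ m, (cs.inversionParity [i] * cs.inversionParity [j]) ^ m =
      cs.inversionParity (alternatingWord i j (2 * m)) := by
    intro m
    induction m with
    | zero => exact cs.inversionParity_nil.symm
    | succ m ih =>
      rw [pow_succ', ih, mul_assoc, ← inversionParity_cons, ← inversionParity_cons, mul_add,
        alternatingWord_succ', alternatingWord_succ']
      simp
  rw [hpow]
  refine SemidirectProduct.ext (funext fun t => ?_) ?_
  · simp [inversionParity, (cs.even_count_leftInvSeq_alternatingWord i j t).natCast_zmod_two]
  · simp [inversionParity, prod_alternatingWord_eq_mul_pow]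

theorem natCast_count_leftInvSeq_eq_of_wordProd_eq {ω ω' : List B}
    (h : cs.wordProd ω = cs.wordProd ω') (t : W) :
    ((cs.leftInvSeq ω).count t : ZMod 2) = (cs.leftInvSeq ω').count t := by
  set η := cs.lift ⟨_, cs.isLiftable_inversionParity⟩
  have hη : ∀ ω, η (cs.wordProd ω) = cs.inversionParity ω := by
    intro ω
    induction ω with
    | nil => rw [wordProd_nil, map_one, inversionParity_nil]
    | cons i ω ih => rw [wordProd_cons, map_mul, ih, inversionParity_cons, lift_apply_simple]
  simpa [inversionParity] using congrArg (fun x => Multiplicative.toAdd (x.left t))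
    ((hη ω).symm.trans ((congrArg η h).trans (hη ω')))

theorem simple_mem_leftInvSeq_of_isLeftDescent {ω : List B} {i : B}
    (h : cs.IsLeftDescent (cs.wordProd ω) i) : cs.simple i ∈ cs.leftInvSeq ω := by
  obtain ⟨ω', hω', hprod⟩ := cs.exists_isReduced (cs.simple i * cs.wordProd ω)
  have hsame : cs.wordProd ω = cs.wordProd (i :: ω') := by
    rw [wordProd_cons, ← hprod, simple_mul_simple_cancel_left]
  have hred : cs.IsReduced (i :: ω') := by
    have := cs.length_simple_mul (cs.wordProd ω) i
    unfold IsLeftDescent at h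
    rw [IsReduced, ← hsame, length_cons, ← hω'.eq, ← hprod]
    omega
  have hcount := cs.natCast_count_leftInvSeq_eq_of_wordProd_eq hsame (cs.simple i)
  rw [count_eq_one_of_mem hred.nodup_leftInvSeq mem_cons_self] at hcount
  by_contra hnot
  rw [count_eq_zero_of_not_mem hnot] at hcount
  exact zero_ne_one hcount

end InversionParity

theorem exists_eraseIdx_of_isLeftDescent {ω : List B} {i : B}
    (h : cs.IsLeftDescent (cs.wordProd ω) i) :
    ∃ k < ω.length, cs.simple i * cs.wordProd ω = cs.wordProd (ω.eraseIdx k) := by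
  obtain ⟨k, hk, hkeq⟩ := mem_iff_getElem.mp (cs.simple_mem_leftInvSeq_of_isLeftDescent h)
  refine ⟨k, by simpa using hk, ?_⟩
  rw [← getD_leftInvSeq_mul_wordProd, getD_eq_getElem _ _ hk, hkeq]

theorem exists_isReduced_sublist_cons {ω : List B} (hω : cs.IsReduced ω) (i : B) :
    ∃ ω', cs.IsReduced ω' ∧ ω'.Sublist (i :: ω) ∧ cs.wordProd ω' = cs.simple i * cs.wordProd ω := by
  rcases cs.length_simple_mul (cs.wordProd ω) i with hasc | hdesc
  · refine ⟨i :: ω, ?_, Sublist.refl _, cs.wordProd_cons i ω⟩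
    rw [IsReduced, wordProd_cons, hasc, hω.eq, length_cons]
  · obtain ⟨k, hk, hkeq⟩ := cs.exists_eraseIdx_of_isLeftDescent
      (show cs.IsLeftDescent (cs.wordProd ω) i by unfold IsLeftDescent; omega)
    refine ⟨ω.eraseIdx k, ?_, (eraseIdx_sublist ω k).cons i, hkeq.symm⟩
    rw [IsReduced, ← hkeq, length_eraseIdx_of_lt hk, ← hω.eq]
    omega

theorem length_map_le {B' W' F : Type*} [Group W'] {M' : CoxeterMatrix B'}
    (cs' : CoxeterSystem M' W') [FunLike F W W'] [MonoidHomClass F W W'] {f : F} {σ : B → B'}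
    (hf : ∀ i, f (cs.simple i) = cs'.simple (σ i)) (w : W) : cs'.length (f w) ≤ cs.length w := by
  obtain ⟨ω, hω, rfl⟩ := cs.exists_isReduced w
  have hfω : f (cs.wordProd ω) = cs'.wordProd (ω.map σ) := by
    simp only [wordProd, map_list_prod, map_map]
    exact congrArg prod (map_congr_left fun i _ => hf i)
  rw [hfω, hω.eq]
  simpa using cs'.length_wordProd_le (ω.map σ)

/-- `v ≤ w` in the right weak order: a reduced word for `v` extends to one for `w`. -/
def WeakLE (v w : W) : Prop := cs.length v + cs.length (v⁻¹ * w) = cs.length w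

theorem weakLE_one_left (w : W) : cs.WeakLE 1 w := by simp [WeakLE]

variable {cs}

theorem WeakLE.length_le {v w : W} (h : cs.WeakLE v w) : cs.length v ≤ cs.length w :=
  h ▸ Nat.le_add_right _ _

theorem WeakLE.eq_of_length_le {v w : W} (h : cs.WeakLE v w) (hlen : cs.length w ≤ cs.length v) :
    v = w := by
  unfold WeakLE at h
  exact inv_mul_eq_one.mp (cs.length_eq_zero_iff.mp (by omega))

theorem WeakLE.simple_mul {v w : W} {i : B} (h : cs.WeakLE v w) (hw : cs.IsLeftDescent w i)
    (hv : ¬ cs.IsLeftDescent v i) : cs.WeakLE (cs.simple i * v) w := by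
  obtain ⟨υ, hυ, rfl⟩ := cs.exists_isReduced v
  obtain ⟨ζ, hζ, hζprod⟩ := cs.exists_isReduced ((cs.wordProd υ)⁻¹ * w)
  have hw_eq : w = cs.wordProd (υ ++ ζ) := by rw [wordProd_append, ← hζprod, mul_inv_cancel_left]
  unfold WeakLE at h ⊢
  unfold IsLeftDescent at hv
  rw [hw_eq] at hw
  obtain ⟨k, hk, hkeq⟩ := cs.exists_eraseIdx_of_isLeftDescent hw
  rw [wordProd_append] at hkeq
  rcases lt_or_ge k υ.length with hkυ | hkυ
  · -- deleting a letter of `υ` would make `i` a left descent of `v`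
    rw [eraseIdx_append_of_lt_length hkυ, wordProd_append, ← mul_assoc] at hkeq
    have := cs.length_wordProd_le (υ.eraseIdx k)
    rw [← mul_right_cancel hkeq, length_eraseIdx_of_lt hkυ] at this
    rw [hυ.eq] at hv
    omega
  · rw [eraseIdx_append_of_length_le hkυ, wordProd_append, ← mul_assoc] at hkeq
    have hquot : (cs.simple i * cs.wordProd υ)⁻¹ * w = cs.wordProd (ζ.eraseIdx (k - υ.length)) := by
      rw [mul_inv_rev, inv_simple, mul_assoc, hw_eq, wordProd_append, ← mul_assoc (cs.simple i),
        hkeq, inv_mul_cancel_left]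
    have hkζ : k - υ.length < ζ.length := by simp only [length_append] at hk; omega
    have h₁ := cs.length_wordProd_le (ζ.eraseIdx (k - υ.length))
    rw [← hquot, length_eraseIdx_of_lt hkζ] at h₁
    have h₂ := cs.length_le_length_mul_add_left (cs.simple i * cs.wordProd υ)⁻¹ w
    rw [length_inv] at h₂
    have h₃ := cs.length_simple_mul (cs.wordProd υ) i
    have hζlen : cs.length ((cs.wordProd υ)⁻¹ * w) = ζ.length := hζprod ▸ hζ.eq
    omega

end CoxeterSystem

namespace CoxeterFixedPoints

open List
open scoped Pointwise

section Parabolic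

variable {B W : Type*} [Group W] {M : CoxeterMatrix B} (cs : CoxeterSystem M W)

theorem simple_mem_parabolic {X : Set B} {i : B} (hi : i ∈ X) : cs.simple i ∈ parabolic cs X :=
  Subgroup.subset_closure ⟨i, hi, rfl⟩

theorem exists_isReduced_of_mem_parabolic {X : Set B} {v : W} (hv : v ∈ parabolic cs X) :
    ∃ ω : List B, cs.IsReduced ω ∧ (∀ i ∈ ω, i ∈ X) ∧ cs.wordProd ω = v := by
  have step : ∀ i ∈ X, ∀ ω : List B, cs.IsReduced ω → (∀ j ∈ ω, j ∈ X) →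
      ∃ ω' : List B, cs.IsReduced ω' ∧ (∀ j ∈ ω', j ∈ X) ∧
        cs.wordProd ω' = cs.simple i * cs.wordProd ω := by
    intro i hi ω hω hωX
    obtain ⟨ω', hω', hsub, hprod⟩ := cs.exists_isReduced_sublist_cons hω i
    exact ⟨ω', hω', fun j hj => forall_mem_cons.mpr ⟨hi, hωX⟩ j (hsub.mem hj), hprod⟩
  induction hv using Subgroup.closure_induction_left with
  | one => exact ⟨[], by simp [CoxeterSystem.IsReduced], by simp, cs.wordProd_nil⟩
  | mul_left x hx y _ ih =>
    obtain ⟨i, hi, rfl⟩ := hx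
    obtain ⟨ω, hω, hωX, rfl⟩ := ih
    exact step i hi ω hω hωX
  | inv_mul_cancel x hx y _ ih =>
    obtain ⟨i, hi, rfl⟩ := hx
    obtain ⟨ω, hω, hωX, rfl⟩ := ih
    rw [cs.inv_simple]
    exact step i hi ω hω hωX

theorem weakLE_of_mem_parabolic {X : Set B} {v w : W} (hX : ∀ i ∈ X, cs.IsLeftDescent w i)
    (hv : v ∈ parabolic cs X) : cs.WeakLE v w := by
  obtain ⟨ω, hω, hωX, rfl⟩ := exists_isReduced_of_mem_parabolic cs hv
  clear hv
  induction ω with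
  | nil => exact cs.weakLE_one_left w
  | cons i ω ih =>
    have hω' : cs.IsReduced ω := by simpa using hω.drop 1
    have hasc : ¬ cs.IsLeftDescent (cs.wordProd ω) i := by
      have := hω.eq
      rw [cs.wordProd_cons, length_cons, ← hω'.eq] at this
      unfold CoxeterSystem.IsLeftDescent
      omega
    rw [cs.wordProd_cons]
    exact (ih hω' fun j hj => hωX j (mem_cons_of_mem i hj)).simple_mul
      (hX i (hωX i mem_cons_self)) hasc

theorem isLeftDescent_of_isLongestElement {X : Set B} {u : W} (hu : IsLongestElement cs X u)
    {i : B} (hi : i ∈ X) : cs.IsLeftDescent u i :=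
  lt_of_le_of_ne (hu.2 _ (mul_mem (simple_mem_parabolic cs hi) hu.1)) (cs.length_simple_mul_ne u i)

theorem IsLongestElement.unique {X : Set B} {u₁ u₂ : W} (h₁ : IsLongestElement cs X u₁)
    (h₂ : IsLongestElement cs X u₂) : u₁ = u₂ :=
  (weakLE_of_mem_parabolic cs (fun _ hi => isLeftDescent_of_isLongestElement cs h₂ hi)
    h₁.1).eq_of_length_le (h₁.2 _ h₂.1)

theorem finite_parabolic_of_isLeftDescent [Finite B] {X : Set B} {w : W}
    (hX : ∀ i ∈ X, cs.IsLeftDescent w i) : (parabolic cs X : Set W).Finite := by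
  refine ((List.finite_length_le B (cs.length w)).image cs.wordProd).subset fun v hv => ?_
  obtain ⟨ω, hω, rfl⟩ := cs.exists_isReduced v
  refine ⟨ω, ?_, rfl⟩
  show ω.length ≤ _
  exact hω.eq ▸ (weakLE_of_mem_parabolic cs hX hv).length_le

theorem exists_isLongestElement {X : Set B} (hX : (parabolic cs X : Set W).Finite) :
    ∃ u, IsLongestElement cs X u :=
  let ⟨u, hu, hmax⟩ := Set.exists_max_image _ cs.length hX ⟨1, one_mem _⟩
  ⟨u, hu, hmax⟩

end Parabolic

section Symmetry

variable {B W G : Type*} [Group W] [Group G] [MulAction G B] {M : CoxeterMatrix B}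
  (cs : CoxeterSystem M W) {φ : G →* MulAut W}

theorem length_apply (hφ : ∀ (g : G) (i : B), φ g (cs.simple i) = cs.simple (g • i)) (g : G)
    (w : W) : cs.length (φ g w) = cs.length w := by
  refine le_antisymm (cs.length_map_le cs (hφ g) w) ?_
  simpa [← MulAut.mul_apply, ← map_mul] using cs.length_map_le cs (hφ g⁻¹) (φ g w)

theorem apply_mem_parabolic (hφ : ∀ (g : G) (i : B), φ g (cs.simple i) = cs.simple (g • i))
    (g : G) {X : Set B} {v : W} (hv : v ∈ parabolic cs X) : φ g v ∈ parabolic cs (g • X) := by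
  induction hv using Subgroup.closure_induction with
  | mem x hx =>
    obtain ⟨i, hi, rfl⟩ := hx
    exact hφ g i ▸ simple_mem_parabolic cs (Set.smul_mem_smul_set hi)
  | one => simpa only [map_one] using one_mem _
  | mul x y _ _ hx hy => simpa only [map_mul] using mul_mem hx hy
  | inv x _ hx => simpa only [map_inv] using inv_mem hx

theorem apply_eq_of_isLongestElement
    (hφ : ∀ (g : G) (i : B), φ g (cs.simple i) = cs.simple (g • i)) {X : Set B}
    (hX : ∀ g : G, g • X = X) {u : W} (hu : IsLongestElement cs X u) (g : G) : φ g u = u :=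
  IsLongestElement.unique cs ⟨hX g ▸ apply_mem_parabolic cs hφ g hu.1,
    fun v hv => length_apply cs hφ g u ▸ hu.2 v hv⟩ hu

theorem isLeftDescent_of_mem_orbit
    (hφ : ∀ (g : G) (i : B), φ g (cs.simple i) = cs.simple (g • i)) {w : W}
    (hw : w ∈ fixedSubgroup φ) {i j : B} (hi : cs.IsLeftDescent w i)
    (hj : j ∈ MulAction.orbit G i) : cs.IsLeftDescent w j := by
  obtain ⟨g, rfl⟩ := hj
  unfold CoxeterSystem.IsLeftDescent at hi ⊢
  have hconj : cs.simple (g • i) * w = φ g (cs.simple i * w) := by rw [map_mul, hφ, hw g]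
  rwa [hconj, length_apply cs hφ]

end Symmetry

theorem fixedSubgroup_generated_by_longest_elements_general
    {S W G : Type*} [Fintype S] [Group W] [Group G] [MulAction G S]
    (M : CoxeterMatrix S) (cs : CoxeterSystem M W)
    (φ : G →* MulAut W) (hφ : ∀ (g : G) (s : S), φ g (cs.simple s) = cs.simple (g • s)) :
    Subgroup.closure {w : W | ∃ X : Set S, IsFinOrbit cs G X ∧ IsLongestElement cs X w}
      = fixedSubgroup φ := by
  have hfixed : ∀ X u, IsFinOrbit cs G X → IsLongestElement cs X u → u ∈ fixedSubgroup φ := by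
    rintro X u ⟨⟨i, rfl⟩, -⟩ hu
    exact apply_eq_of_isLongestElement cs hφ (fun g => MulAction.smul_orbit g i) hu
  refine le_antisymm ((Subgroup.closure_le _).2 fun u ⟨X, hX, hu⟩ => hfixed X u hX hu) ?_
  intro w hw
  induction hlen : cs.length w using Nat.strong_induction_on generalizing w with
  | _ n ih =>
  obtain rfl | hne := eq_or_ne w 1
  · exact one_mem _
  obtain ⟨i, hi⟩ := cs.exists_leftDescent_of_ne_one hne
  have hX : ∀ j ∈ MulAction.orbit G i, cs.IsLeftDescent w j :=
    fun _ => isLeftDescent_of_mem_orbit cs hφ hw hi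
  have hfin := finite_parabolic_of_isLeftDescent cs hX
  obtain ⟨u, hu⟩ := exists_isLongestElement cs hfin
  have horbit : IsFinOrbit cs G (MulAction.orbit G i) := ⟨⟨i, rfl⟩, hfin⟩
  have hsplit := weakLE_of_mem_parabolic cs hX hu.1
  have hpos : 1 ≤ cs.length u :=
    cs.length_simple i ▸ hu.2 _ (simple_mem_parabolic cs (MulAction.mem_orbit_self i))
  rw [← mul_inv_cancel_left u w]
  refine mul_mem (Subgroup.subset_closure ⟨_, horbit, hu⟩) (ih _ ?_ ?_ rfl)
  · unfold CoxeterSystem.WeakLE at hsplit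
    omega
  · exact mul_mem (inv_mem (hfixed _ _ horbit hu)) hw

/-- `W^G` is generated by the longest elements `w_X`, `X ∈ 𝒮`. -/
theorem fixedSubgroup_generated_by_longest_elements
    {S W G : Type*} [Fintype S] [Group W] [Group G] [MulAction G S]
    (M : CoxeterMatrix S) (cs : CoxeterSystem M W)
    (hGM : ∀ (g : G) (s t : S), M (g • s) (g • t) = M s t)
    (φ : G →* MulAut W) (hφ : ∀ (g : G) (s : S), φ g (cs.simple s) = cs.simple (g • s)) :
    Subgroup.closure {w : W | ∃ X : Set S, IsFinOrbit cs G X ∧ IsLongestElement cs X w}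
      = fixedSubgroup φ :=
  fixedSubgroup_generated_by_longest_elements_general M cs φ hφ

end CoxeterFixedPoints
end
end

section
/- Let X,Y∈𝒮 be distinct orbits such that m_{s,t}≥3 for at least one pair (s,t)∈X×Y. Then: (i) for s∈X, the number v_X = |{t∈Y | m_{s,t}≥3}| and the sum p_X = Σ_{t∈Y} ⟨ε_s,ε_t⟩ do not depend on the choice of s∈X (and symmetrically for v_Y, p_Y with t∈Y); (ii) v_X ≥ 1, v_Y ≥ 1, and |X|·v_X = |Y|·v_Y; (iii) p_X ≤ −v_X/2. -/
noncomputable section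

open Real

namespace CoxeterFixedPoints

/-- basic properties of `v_X`, `p_X`, `v_Y`, `p_Y` for distinct orbits
`X, Y ∈ 𝒮` joined by at least one edge. -/
theorem vcount_psum_properties
    {S W V G : Type*} [Fintype S] [Group W]
    [AddCommGroup V] [Module ℝ V] [FiniteDimensional ℝ V]
    [Group G] [MulAction G S]
    (M : CoxeterMatrix S) (cs : CoxeterSystem M W)
    (B : V →ₗ[ℝ] V →ₗ[ℝ] ℝ) (ε : S → V) (hrb : IsRootBasis M B ε)
    (hGM : ∀ (g : G) (s t : S), M (g • s) (g • t) = M s t)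
    (ρ : G →* (V ≃ₗ[ℝ] V)) (hρε : ∀ (g : G) (s : S), ρ g (ε s) = ε (g • s))
    (hρB : ∀ (g : G) (x y : V), B (ρ g x) (ρ g y) = B x y)
    (X Y : Set S) (hX : IsFinOrbit cs G X) (hY : IsFinOrbit cs G Y) (hne : X ≠ Y)
    (hedge : ∃ s ∈ X, ∃ t ∈ Y, M s t = 0 ∨ 3 ≤ M s t) :
    ((∀ s ∈ X, ∀ s' ∈ X,
        vcount M Y s = vcount M Y s' ∧ psum B ε Y s = psum B ε Y s') ∧
     (∀ t ∈ Y, ∀ t' ∈ Y,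
        vcount M X t = vcount M X t' ∧ psum B ε X t = psum B ε X t')) ∧
    ((∀ s ∈ X, 1 ≤ vcount M Y s) ∧ (∀ t ∈ Y, 1 ≤ vcount M X t) ∧
     (∀ s ∈ X, ∀ t ∈ Y, X.ncard * vcount M Y s = Y.ncard * vcount M X t)) ∧
    (∀ s ∈ X, psum B ε Y s ≤ - (vcount M Y s : ℝ) / 2) := by
  classical
  obtain ⟨hBsymm, hBone, hBcos, hBinf, -⟩ := hrb
  obtain ⟨⟨s0, hXs0⟩, -⟩ := hX
  obtain ⟨⟨t0, hYt0⟩, -⟩ := hY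
  -- stability and transitivity of the orbits
  have hstab : ∀ (Z : Set S) (z0 : S), Z = MulAction.orbit G z0 →
      ∀ (g : G), ∀ t ∈ Z, g • t ∈ Z := by
    rintro Z z0 rfl g t ht
    obtain ⟨h, rfl⟩ := ht
    exact ⟨g * h, (mul_smul g h z0)⟩
  have hstabX := hstab X s0 hXs0
  have hstabY := hstab Y t0 hYt0
  have htrans : ∀ (Z : Set S) (z0 : S), Z = MulAction.orbit G z0 →
      ∀ s ∈ Z, ∀ s' ∈ Z, ∃ g : G, g • s = s' := by
    rintro Z z0 rfl s hs s' hs'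
    obtain ⟨g1, rfl⟩ := hs
    obtain ⟨g2, rfl⟩ := hs'
    exact ⟨g2 * g1⁻¹, by rw [mul_smul, inv_smul_smul]⟩
  have htransX := htrans X s0 hXs0
  have htransY := htrans Y t0 hYt0
  -- distinct orbits are disjoint
  have hdisjXY : ∀ s ∈ X, s ∉ Y := by
    intro s hs hsY
    apply hne
    rw [hXs0, hYt0]
    rw [hXs0] at hs
    rw [hYt0] at hsY
    rw [← MulAction.orbit_eq_iff.mpr hs, ← MulAction.orbit_eq_iff.mpr hsY]
  -- bijections of orbits
  have hbij : ∀ (Z : Set S), (∀ (g : G), ∀ t ∈ Z, g • t ∈ Z) →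
      ∀ (g : G), Set.BijOn (fun t => g • t) Z Z := by
    intro Z hZ g
    refine ⟨fun t ht => hZ g t ht, fun a _ b _ h => smul_left_cancel g h, fun t ht => ?_⟩
    exact ⟨g⁻¹ • t, hZ g⁻¹ t ht, smul_inv_smul g t⟩
  -- invariance of vcount and psum under the action
  have hvinv : ∀ (Z : Set S), (∀ (g : G), ∀ t ∈ Z, g • t ∈ Z) →
      ∀ (g : G) (s : S), vcount M Z (g • s) = vcount M Z s := by
    intro Z hZ g s
    unfold vcount
    have himg : {t | t ∈ Z ∧ (M (g • s) t = 0 ∨ 3 ≤ M (g • s) t)}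
        = (fun t => g • t) '' {t | t ∈ Z ∧ (M s t = 0 ∨ 3 ≤ M s t)} := by
      ext t'
      simp only [Set.mem_image, Set.mem_setOf_eq]
      constructor
      · rintro ⟨ht'Z, hP⟩
        refine ⟨g⁻¹ • t', ⟨hZ g⁻¹ t' ht'Z, ?_⟩, smul_inv_smul g t'⟩
        rwa [← hGM g s (g⁻¹ • t'), smul_inv_smul]
      · rintro ⟨t, ⟨htZ, hP⟩, rfl⟩
        exact ⟨hZ g t htZ, by rwa [hGM g s t]⟩
    rw [himg, Set.ncard_image_of_injective _ (MulAction.injective g)]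
  have hpinv : ∀ (Z : Set S), (∀ (g : G), ∀ t ∈ Z, g • t ∈ Z) →
      ∀ (g : G) (s : S), psum B ε Z (g • s) = psum B ε Z s := by
    intro Z hZ g s
    unfold psum
    refine (finsum_mem_eq_of_bijOn (fun t => g • t) (hbij Z hZ g)
      (fun t _ => ?_)).symm
    show B (ε s) (ε t) = B (ε (g • s)) (ε (g • t))
    rw [← hρε g s, ← hρε g t, hρB]
  -- part (i)
  have hXvp : ∀ s ∈ X, ∀ s' ∈ X,
      vcount M Y s = vcount M Y s' ∧ psum B ε Y s = psum B ε Y s' := by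
    intro s hs s' hs'
    obtain ⟨g, rfl⟩ := htransX s hs s' hs'
    exact ⟨(hvinv Y hstabY g s).symm, (hpinv Y hstabY g s).symm⟩
  have hYvp : ∀ t ∈ Y, ∀ t' ∈ Y,
      vcount M X t = vcount M X t' ∧ psum B ε X t = psum B ε X t' := by
    intro t ht t' ht'
    obtain ⟨g, rfl⟩ := htransY t ht t' ht'
    exact ⟨(hvinv X hstabX g t).symm, (hpinv X hstabX g t).symm⟩
  obtain ⟨sE, hsE, tE, htE, hPE⟩ := hedge
  -- part (ii) : v ≥ 1
  have hv1X : ∀ s ∈ X, 1 ≤ vcount M Y s := by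
    intro s hs
    rw [(hXvp s hs sE hsE).1]
    exact (Set.ncard_pos (Set.toFinite _)).mpr ⟨tE, htE, hPE⟩
  have hv1Y : ∀ t ∈ Y, 1 ≤ vcount M X t := by
    intro t ht
    rw [(hYvp t ht tE htE).1]
    refine (Set.ncard_pos (Set.toFinite _)).mpr ⟨sE, hsE, ?_⟩
    rwa [M.symmetric tE sE]
  -- Finset versions
  set Xf := (Set.toFinite X).toFinset with hXf
  set Yf := (Set.toFinite Y).toFinset with hYf
  have hvcard : ∀ (Z : Set S) (hZ : Z.Finite) (s : S),
      vcount M Z s = (hZ.toFinset.filter (fun t => M s t = 0 ∨ 3 ≤ M s t)).card := by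
    intro Z hZ s
    rw [vcount, ← Set.ncard_coe_finset]
    congr 1
    ext t
    simp only [Finset.coe_filter, Set.Finite.mem_toFinset, Set.mem_setOf_eq]
  -- double counting
  have hdouble : ∑ s ∈ Xf, vcount M Y s = ∑ t ∈ Yf, vcount M X t := by
    calc ∑ s ∈ Xf, vcount M Y s
        = ∑ s ∈ Xf, ∑ t ∈ Yf, (if M s t = 0 ∨ 3 ≤ M s t then 1 else 0) := by
          refine Finset.sum_congr rfl fun s _ => ?_
          rw [hvcard Y (Set.toFinite Y) s, Finset.card_filter]
      _ = ∑ t ∈ Yf, ∑ s ∈ Xf, (if M s t = 0 ∨ 3 ≤ M s t then 1 else 0) := Finset.sum_comm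
      _ = ∑ t ∈ Yf, vcount M X t := by
          refine Finset.sum_congr rfl fun t _ => ?_
          rw [hvcard X (Set.toFinite X) t, Finset.card_filter]
          refine Finset.sum_congr rfl fun s _ => ?_
          rw [M.symmetric t s]
  have hcardX : Xf.card = X.ncard := by
    rw [← Set.ncard_coe_finset, Set.Finite.coe_toFinset]
  have hcardY : Yf.card = Y.ncard := by
    rw [← Set.ncard_coe_finset, Set.Finite.coe_toFinset]
  have hmemXf : ∀ s, s ∈ Xf ↔ s ∈ X := fun s => Set.Finite.mem_toFinset _
  have hmemYf : ∀ t, t ∈ Yf ↔ t ∈ Y := fun t => Set.Finite.mem_toFinset _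
  have hcount : ∀ s ∈ X, ∀ t ∈ Y,
      X.ncard * vcount M Y s = Y.ncard * vcount M X t := by
    intro s hs t ht
    have h1 : ∑ s' ∈ Xf, vcount M Y s' = X.ncard * vcount M Y s := by
      rw [Finset.sum_congr rfl fun s' hs' => ((hXvp s hs s' ((hmemXf s').mp hs')).1).symm,
        Finset.sum_const, smul_eq_mul, hcardX]
    have h2 : ∑ t' ∈ Yf, vcount M X t' = Y.ncard * vcount M X t := by
      rw [Finset.sum_congr rfl fun t' ht' => ((hYvp t ht t' ((hmemYf t').mp ht')).1).symm,
        Finset.sum_const, smul_eq_mul, hcardY]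
    rw [← h1, ← h2, hdouble]
  -- part (iii)
  have hterm_edge : ∀ s t : S, s ≠ t → (M s t = 0 ∨ 3 ≤ M s t) →
      B (ε s) (ε t) ≤ -(1/2 : ℝ) := by
    intro s t hst hP
    rcases hP with h0 | h3
    · linarith [hBinf s t hst h0]
    · rw [hBcos s t hst (by omega)]
      have hm : (3 : ℝ) ≤ (M s t : ℝ) := by exact_mod_cast h3
      have hcos : Real.cos (Real.pi / 3) ≤ Real.cos (Real.pi / (M s t : ℝ)) := by
        apply Real.cos_le_cos_of_nonneg_of_le_pi
        · positivity
        · nlinarith [Real.pi_pos]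
        · apply div_le_div_of_nonneg_left Real.pi_pos.le (by norm_num)
          exact hm
      rw [Real.cos_pi_div_three] at hcos
      linarith
  have hterm_zero : ∀ s t : S, s ≠ t → ¬(M s t = 0 ∨ 3 ≤ M s t) →
      B (ε s) (ε t) = 0 := by
    intro s t hst hP
    have h2 : M s t = 2 := by
      have h1 := M.off_diagonal s t hst
      omega
    rw [hBcos s t hst (by omega), h2]
    norm_num [Real.cos_pi_div_two]
  have hpsumX : ∀ s ∈ X, psum B ε Y s ≤ -(vcount M Y s : ℝ) / 2 := by
    intro s hs
    have hsnY : s ∉ Y := hdisjXY s hs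
    rw [psum, finsum_mem_eq_finite_toFinset_sum _ (Set.toFinite Y)]
    rw [← Finset.sum_filter_add_sum_filter_not (Set.toFinite Y).toFinset
      (fun t => M s t = 0 ∨ 3 ≤ M s t)]
    have hz : ∑ t ∈ (Set.toFinite Y).toFinset.filter
        (fun t => ¬(M s t = 0 ∨ 3 ≤ M s t)), B (ε s) (ε t) = 0 := by
      refine Finset.sum_eq_zero fun t ht => ?_
      rw [Finset.mem_filter, Set.Finite.mem_toFinset] at ht
      exact hterm_zero s t (fun h => hsnY (h ▸ ht.1)) ht.2
    have hb : ∑ t ∈ (Set.toFinite Y).toFinset.filter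
        (fun t => M s t = 0 ∨ 3 ≤ M s t), B (ε s) (ε t)
        ≤ ((Set.toFinite Y).toFinset.filter
          (fun t => M s t = 0 ∨ 3 ≤ M s t)).card * (-(1/2 : ℝ)) := by
      calc ∑ t ∈ (Set.toFinite Y).toFinset.filter
            (fun t => M s t = 0 ∨ 3 ≤ M s t), B (ε s) (ε t)
          ≤ ∑ _t ∈ (Set.toFinite Y).toFinset.filter
            (fun t => M s t = 0 ∨ 3 ≤ M s t), (-(1/2 : ℝ)) := by
            refine Finset.sum_le_sum fun t ht => ?_
            rw [Finset.mem_filter, Set.Finite.mem_toFinset] at ht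
            exact hterm_edge s t (fun h => hsnY (h ▸ ht.1)) ht.2
        _ = _ := by rw [Finset.sum_const, nsmul_eq_mul]
    have hvc := hvcard Y (Set.toFinite Y) s
    rw [hz, add_zero]
    refine hb.trans ?_
    rw [← hvc]
    ring_nf
    linarith
  exact ⟨⟨hXvp, hYvp⟩, ⟨hv1X, hv1Y, hcount⟩, hpsumX⟩


end CoxeterFixedPoints
end
end

section
/- Let X,Y∈𝒮 be distinct orbits, both of type I, such that m_{s,t}≥3 for at least one pair (s,t)∈X×Y. Then ⟨ε̃_X, ε̃_Y⟩ = p_X·√(v_Y)/√(v_X). -/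
noncomputable section

open Real

namespace CoxeterFixedPoints

lemma smul_mem_orbit_set_iff {G S : Type*} [Group G] [MulAction G S]
    {X : Set S} (hX : ∃ s : S, X = MulAction.orbit G s) (g : G) (t : S) :
    g • t ∈ X ↔ t ∈ X := by
  obtain ⟨s₀, rfl⟩ := hX
  simp only [MulAction.mem_orbit_iff]
  constructor
  · rintro ⟨h, hh⟩
    exact ⟨g⁻¹ * h, by rw [mul_smul, hh, inv_smul_smul]⟩
  · rintro ⟨h, hh⟩
    exact ⟨g * h, by rw [mul_smul, hh]⟩

lemma exists_smul_eq_of_mem_orbit {G S : Type*} [Group G] [MulAction G S]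
    {X : Set S} (hX : ∃ s : S, X = MulAction.orbit G s) {s s' : S}
    (hs : s ∈ X) (hs' : s' ∈ X) : ∃ g : G, g • s = s' := by
  obtain ⟨s₀, rfl⟩ := hX
  obtain ⟨g₁, hg₁⟩ := hs
  obtain ⟨g₂, hg₂⟩ := hs'
  have hg₁' : g₁ • s₀ = s := hg₁
  have hg₂' : g₂ • s₀ = s' := hg₂
  exact ⟨g₂ * g₁⁻¹, by rw [mul_smul, ← hg₁', inv_smul_smul, hg₂']⟩

lemma vcount_smul {S G : Type*} [Group G] [MulAction G S]
    (M : CoxeterMatrix S) (hGM : ∀ (g : G) (s t : S), M (g • s) (g • t) = M s t)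
    {Y : Set S} (hY : ∃ t : S, Y = MulAction.orbit G t)
    (g : G) (s : S) : vcount M Y (g • s) = vcount M Y s := by
  unfold vcount
  have himg : {t | t ∈ Y ∧ (M (g • s) t = 0 ∨ 3 ≤ M (g • s) t)}
      = (g • ·) '' {t | t ∈ Y ∧ (M s t = 0 ∨ 3 ≤ M s t)} := by
    ext t
    simp only [Set.mem_image, Set.mem_setOf_eq]
    constructor
    · rintro ⟨htY, hm⟩
      refine ⟨g⁻¹ • t, ⟨(smul_mem_orbit_set_iff hY g⁻¹ t).mpr htY, ?_⟩, smul_inv_smul g t⟩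
      rwa [← smul_inv_smul g t, hGM g s (g⁻¹ • t)] at hm
    · rintro ⟨u, ⟨huY, hm⟩, rfl⟩
      exact ⟨(smul_mem_orbit_set_iff hY g u).mpr huY, by rwa [hGM g s u]⟩
  rw [himg, Set.ncard_image_of_injective _ (MulAction.injective g)]

lemma vcount_const {S G : Type*} [Group G] [MulAction G S]
    (M : CoxeterMatrix S) (hGM : ∀ (g : G) (s t : S), M (g • s) (g • t) = M s t)
    {X Y : Set S} (hX : ∃ s : S, X = MulAction.orbit G s)
    (hY : ∃ t : S, Y = MulAction.orbit G t)
    {s s' : S} (hs : s ∈ X) (hs' : s' ∈ X) : vcount M Y s = vcount M Y s' := by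
  obtain ⟨g, rfl⟩ := exists_smul_eq_of_mem_orbit hX hs hs'
  exact (vcount_smul M hGM hY g s).symm

lemma psum_smul {S V G : Type*} [AddCommGroup V] [Module ℝ V] [Group G] [MulAction G S]
    (B : V →ₗ[ℝ] V →ₗ[ℝ] ℝ) (ε : S → V)
    (ρ : G →* (V ≃ₗ[ℝ] V)) (hρε : ∀ (g : G) (s : S), ρ g (ε s) = ε (g • s))
    (hρB : ∀ (g : G) (x y : V), B (ρ g x) (ρ g y) = B x y)
    {Y : Set S} (hY : ∃ t : S, Y = MulAction.orbit G t)
    (g : G) (s : S) : psum B ε Y (g • s) = psum B ε Y s := by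
  unfold psum
  have himg : Y = (g • ·) '' Y := by
    ext t
    simp only [Set.mem_image]
    constructor
    · intro ht
      exact ⟨g⁻¹ • t, (smul_mem_orbit_set_iff hY g⁻¹ t).mpr ht, smul_inv_smul g t⟩
    · rintro ⟨u, hu, rfl⟩
      exact (smul_mem_orbit_set_iff hY g u).mpr hu
  calc ∑ᶠ t ∈ Y, B (ε (g • s)) (ε t)
      = ∑ᶠ t ∈ (g • ·) '' Y, B (ε (g • s)) (ε t) := by rw [← himg]
    _ = ∑ᶠ t ∈ Y, B (ε (g • s)) (ε (g • t)) :=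
        finsum_mem_image (fun a _ b _ h => MulAction.injective g h)
    _ = ∑ᶠ t ∈ Y, B (ε s) (ε t) := by
        refine finsum_mem_congr rfl (fun t _ => ?_)
        rw [← hρε g s, ← hρε g t, hρB]

lemma psum_const {S V G : Type*} [AddCommGroup V] [Module ℝ V] [Group G] [MulAction G S]
    (B : V →ₗ[ℝ] V →ₗ[ℝ] ℝ) (ε : S → V)
    (ρ : G →* (V ≃ₗ[ℝ] V)) (hρε : ∀ (g : G) (s : S), ρ g (ε s) = ε (g • s))
    (hρB : ∀ (g : G) (x y : V), B (ρ g x) (ρ g y) = B x y)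
    {X Y : Set S} (hX : ∃ s : S, X = MulAction.orbit G s)
    (hY : ∃ t : S, Y = MulAction.orbit G t)
    {s s' : S} (hs : s ∈ X) (hs' : s' ∈ X) : psum B ε Y s = psum B ε Y s' := by
  obtain ⟨g, rfl⟩ := exists_smul_eq_of_mem_orbit hX hs hs'
  exact (psum_smul B ε ρ hρε hρB hY g s).symm

/-- if `X` and `Y` are distinct orbits of type I joined by an edge, then
`⟨ε̃_X, ε̃_Y⟩ = p_X √v_Y / √v_X`. -/
theorem epsTilde_inner_type_I_I
    {S W V G : Type*} [Fintype S] [Group W]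
    [AddCommGroup V] [Module ℝ V] [FiniteDimensional ℝ V]
    [Group G] [MulAction G S]
    (M : CoxeterMatrix S) (cs : CoxeterSystem M W)
    (B : V →ₗ[ℝ] V →ₗ[ℝ] ℝ) (ε : S → V) (hrb : IsRootBasis M B ε)
    (hGM : ∀ (g : G) (s t : S), M (g • s) (g • t) = M s t)
    (ρ : G →* (V ≃ₗ[ℝ] V)) (hρε : ∀ (g : G) (s : S), ρ g (ε s) = ε (g • s))
    (hρB : ∀ (g : G) (x y : V), B (ρ g x) (ρ g y) = B x y)
    (X Y : Set S) (hX : IsFinOrbit cs G X) (hY : IsFinOrbit cs G Y) (hne : X ≠ Y)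
    (hXI : TypeI M X) (hYI : TypeI M Y)
    (hedge : ∃ s ∈ X, ∃ t ∈ Y, M s t = 0 ∨ 3 ≤ M s t) :
    ∀ s ∈ X, ∀ t ∈ Y,
      B (epsTilde B ε X) (epsTilde B ε Y)
        = psum B ε Y s * Real.sqrt (vcount M X t) / Real.sqrt (vcount M Y s) := by

  classical
  intro s hs t ht
  obtain ⟨hXorb, -⟩ := hX
  obtain ⟨hYorb, -⟩ := hY
  have hXfin : X.Finite := Set.toFinite X
  have hYfin : Y.Finite := Set.toFinite Y
  set fX := hXfin.toFinset with hfX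
  set fY := hYfin.toFinset with hfY
  have hmemX : ∀ u, u ∈ fX ↔ u ∈ X := fun u => hXfin.mem_toFinset
  have hmemY : ∀ u, u ∈ fY ↔ u ∈ Y := fun u => hYfin.mem_toFinset
  -- distinct orbits are disjoint
  have hdisj : ∀ u ∈ X, u ∉ Y := by
    intro u hu hu'
    apply hne
    obtain ⟨x₀, hx₀⟩ := hXorb
    obtain ⟨y₀, hy₀⟩ := hYorb
    rw [hx₀] at hu ⊢
    rw [hy₀] at hu' ⊢
    rw [← MulAction.orbit_eq_iff.mpr hu, ← MulAction.orbit_eq_iff.mpr hu']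
  have haX : aVec ε X = ∑ u ∈ fX, ε u := by
    rw [aVec, finsum_mem_eq_finite_toFinset_sum _ hXfin]
  have haY : aVec ε Y = ∑ u ∈ fY, ε u := by
    rw [aVec, finsum_mem_eq_finite_toFinset_sum _ hYfin]
  -- ⟨a_X, a_X⟩ = |X|
  have diagSum : ∀ (Z : Set S) (hZfin : Z.Finite), TypeI M Z →
      B (aVec ε Z) (aVec ε Z) = (hZfin.toFinset.card : ℝ) := by
    intro Z hZfin hZI
    have ha : aVec ε Z = ∑ u ∈ hZfin.toFinset, ε u := by
      rw [aVec, finsum_mem_eq_finite_toFinset_sum _ hZfin]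
    nth_rewrite 1 [ha]
    rw [map_sum, LinearMap.sum_apply]
    have hrow : ∀ u ∈ hZfin.toFinset, B (ε u) (aVec ε Z) = 1 := by
      intro u hu
      rw [ha, map_sum]
      rw [Finset.sum_eq_single u ?h0 (fun h => absurd hu h)]
      · exact hrb.2.1 u
      · intro b hb hbu
        have hub : u ≠ b := fun h => hbu h.symm
        have h2 : M u b = 2 :=
          hZI u (hZfin.mem_toFinset.mp hu) b (hZfin.mem_toFinset.mp hb) hub
        rw [hrb.2.2.1 u b hub (by rw [h2]; norm_num), h2]
        norm_num
    rw [Finset.sum_congr rfl hrow, Finset.sum_const, nsmul_eq_mul, mul_one]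
  have hBXX : B (aVec ε X) (aVec ε X) = (fX.card : ℝ) := diagSum X hXfin hXI
  have hBYY : B (aVec ε Y) (aVec ε Y) = (fY.card : ℝ) := diagSum Y hYfin hYI
  -- ⟨a_X, a_Y⟩ = |X| p
  have hBXY : B (aVec ε X) (aVec ε Y) = (fX.card : ℝ) * psum B ε Y s := by
    rw [haX, map_sum, LinearMap.sum_apply]
    have hrow : ∀ u ∈ fX, B (ε u) (aVec ε Y) = psum B ε Y s := by
      intro u hu
      have h1 : B (ε u) (aVec ε Y) = psum B ε Y u := by
        rw [haY, map_sum, psum, finsum_mem_eq_finite_toFinset_sum _ hYfin]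
      rw [h1]
      exact psum_const B ε ρ hρε hρB hXorb hYorb ((hmemX u).mp hu) hs
    rw [Finset.sum_congr rfl hrow, Finset.sum_const, nsmul_eq_mul]
  -- vcount as finset card
  have hvfin : ∀ (Z : Set S) (hZfin : Z.Finite) (u : S),
      vcount M Z u = (hZfin.toFinset.filter (fun r => M u r = 0 ∨ 3 ≤ M u r)).card := by
    intro Z hZfin u
    rw [vcount, ← Set.ncard_coe_finset]
    congr 1
    ext r
    simp only [Finset.coe_filter, Set.Finite.mem_toFinset, Set.mem_setOf_eq]
  -- double counting
  have hsumX : ∑ u ∈ fX, vcount M Y u = fX.card * vcount M Y s := by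
    have h : ∀ u ∈ fX, vcount M Y u = vcount M Y s := fun u hu =>
      vcount_const M hGM hXorb hYorb ((hmemX u).mp hu) hs
    rw [Finset.sum_congr rfl h, Finset.sum_const, smul_eq_mul]
  have hsumY : ∑ r ∈ fY, vcount M X r = fY.card * vcount M X t := by
    have h : ∀ r ∈ fY, vcount M X r = vcount M X t := fun r hr =>
      vcount_const M hGM hYorb hXorb ((hmemY r).mp hr) ht
    rw [Finset.sum_congr rfl h, Finset.sum_const, smul_eq_mul]
  have hdouble : ∑ u ∈ fX, vcount M Y u = ∑ r ∈ fY, vcount M X r := by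
    have hL : ∀ u ∈ fX, vcount M Y u
        = (fY.filter (fun r => M u r = 0 ∨ 3 ≤ M u r)).card :=
      fun u _ => hvfin Y hYfin u
    have hR : ∀ r ∈ fY, vcount M X r
        = (fX.filter (fun u => M r u = 0 ∨ 3 ≤ M r u)).card :=
      fun r _ => hvfin X hXfin r
    rw [Finset.sum_congr rfl hL, Finset.sum_congr rfl hR]
    simp_rw [Finset.card_filter]
    rw [Finset.sum_comm]
    refine Finset.sum_congr rfl (fun r _ => Finset.sum_congr rfl (fun u _ => ?_))
    rw [M.symmetric u r]
  have hrel : fX.card * vcount M Y s = fY.card * vcount M X t := by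
    rw [← hsumX, hdouble, hsumY]
  -- positivity
  obtain ⟨s₁, hs₁, t₁, ht₁, he₁⟩ := hedge
  have hvYs_pos : 0 < vcount M Y s := by
    have h1 : 0 < vcount M Y s₁ := by
      rw [vcount]
      refine (Set.ncard_pos (hYfin.subset (fun r hr => hr.1))).mpr ⟨t₁, ht₁, he₁⟩
    rwa [vcount_const M hGM hXorb hYorb hs hs₁]
  have hvXt_pos : 0 < vcount M X t := by
    have h1 : 0 < vcount M X t₁ := by
      rw [vcount]
      refine (Set.ncard_pos (hXfin.subset (fun r hr => hr.1))).mpr ⟨s₁, hs₁, ?_⟩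
      rwa [M.symmetric t₁ s₁]
    rwa [vcount_const M hGM hYorb hXorb ht ht₁]
  have hnX : (0 : ℝ) < (fX.card : ℝ) := by
    exact_mod_cast Finset.card_pos.mpr ⟨s, (hmemX s).mpr hs⟩
  have hnY : (0 : ℝ) < (fY.card : ℝ) := by
    exact_mod_cast Finset.card_pos.mpr ⟨t, (hmemY t).mpr ht⟩
  set nX := ((fX.card : ℕ) : ℝ)
  set nY := ((fY.card : ℕ) : ℝ)
  set p := psum B ε Y s
  set vX := ((vcount M X t : ℕ) : ℝ) with hvXdef
  set vY := ((vcount M Y s : ℕ) : ℝ) with hvYdef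
  have hvX : (0 : ℝ) < vX := by
    show (0 : ℝ) < ((vcount M X t : ℕ) : ℝ); exact_mod_cast hvXt_pos
  have hvY : (0 : ℝ) < vY := by
    show (0 : ℝ) < ((vcount M Y s : ℕ) : ℝ); exact_mod_cast hvYs_pos
  have hrelR : nX * vY = nY * vX := by
    show ((fX.card : ℕ) : ℝ) * ((vcount M Y s : ℕ) : ℝ)
        = ((fY.card : ℕ) : ℝ) * ((vcount M X t : ℕ) : ℝ)
    exact_mod_cast hrel
  have hgoal : B (epsTilde B ε X) (epsTilde B ε Y)
      = (Real.sqrt nX)⁻¹ * ((Real.sqrt nY)⁻¹ * (nX * p)) := by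
    simp only [epsTilde, map_smul, LinearMap.smul_apply, smul_eq_mul, hBXX, hBYY, hBXY]
    ring
  rw [hgoal]
  have sX : (0 : ℝ) < Real.sqrt nX := Real.sqrt_pos.mpr hnX
  have sY : (0 : ℝ) < Real.sqrt nY := Real.sqrt_pos.mpr hnY
  have sVX : (0 : ℝ) < Real.sqrt vX := Real.sqrt_pos.mpr hvX
  have sVY : (0 : ℝ) < Real.sqrt vY := Real.sqrt_pos.mpr hvY
  have hnXsq : Real.sqrt nX * Real.sqrt nX = nX := Real.mul_self_sqrt hnX.le
  have h1 : Real.sqrt nX * Real.sqrt vY = Real.sqrt nY * Real.sqrt vX := by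
    rw [← Real.sqrt_mul hnX.le, ← Real.sqrt_mul hnY.le, hrelR]
  rw [eq_div_iff sVY.ne']
  have h2 : nX * Real.sqrt vY = Real.sqrt nX * (Real.sqrt nY * Real.sqrt vX) := by
    rw [← h1, ← mul_assoc, hnXsq]
  calc (Real.sqrt nX)⁻¹ * ((Real.sqrt nY)⁻¹ * (nX * p)) * Real.sqrt vY
      = (nX * Real.sqrt vY) * p * ((Real.sqrt nX)⁻¹ * (Real.sqrt nY)⁻¹) := by ring
    _ = (Real.sqrt nX * (Real.sqrt nY * Real.sqrt vX)) * p
          * ((Real.sqrt nX)⁻¹ * (Real.sqrt nY)⁻¹) := by rw [h2]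
    _ = p * Real.sqrt vX * (Real.sqrt nX * (Real.sqrt nX)⁻¹)
          * (Real.sqrt nY * (Real.sqrt nY)⁻¹) := by ring
    _ = p * Real.sqrt vX := by
        rw [mul_inv_cancel₀ sX.ne', mul_inv_cancel₀ sY.ne', mul_one, mul_one]


end CoxeterFixedPoints
end
end
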